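/- arXiv:2304.13605 — 7 statements merged into one kernel-verified Lean document; each statement's English description precedes it below -/
import Mathlib

section
/- If f_1,...,f_n ∈ K[[x]] are linearly independent over K, then there exists an invertible n×n matrix A over K such that the power series g_1,...,g_n defined by [g_1 ... g_n] = [f_1 ... f_n]·A are all nonzero and have pairwise distinct orders. -/
open PowerSeries Module

-- linear independence from distinct orders
lemma li_of_distinct_orders {K : Type*} [Field K] {m : ℕ} (g : Fin m → K⟦X⟧)
    (h0 : ∀ i, g i ≠ 0) (hinj : Function.Injective (fun i => (g i).order)) :
    LinearIndependent K g := by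
  classical
  rw [Fintype.linearIndependent_iff]
  intro c hc
  by_contra hne
  push_neg at hne
  obtain ⟨i₀, hi₀⟩ := hne
  set s : Finset (Fin m) := Finset.univ.filter (fun i => c i ≠ 0) with hs
  have hsne : s.Nonempty := ⟨i₀, by simp [hs, hi₀]⟩
  obtain ⟨i₁, hi₁s, hmin⟩ := s.exists_min_image (fun i => (g i).order) hsne
  have hiorder : (g i₁).order ≠ ⊤ := fun h => h0 i₁ (order_eq_top.mp h)
  obtain ⟨k, hk⟩ := WithTop.ne_top_iff_exists.mp hiorder
  have hck : (PowerSeries.coeff k) (∑ i, c i • g i) = c i₁ * (PowerSeries.coeff k) (g i₁) := by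
    rw [map_sum]
    rw [Finset.sum_eq_single i₁]
    · rw [map_smul, smul_eq_mul]
    · intro i _ hne
      by_cases hci : c i = 0
      · rw [hci, zero_smul, map_zero]
      have his : i ∈ s := Finset.mem_filter.mpr ⟨Finset.mem_univ i, hci⟩
      have hle : (g i₁).order ≤ (g i).order := hmin i his
      rw [← hk] at hle
      have hlt : (↑k : ℕ∞) < (g i).order := by
        rcases lt_or_eq_of_le hle with h | h
        · exact h
        · exact absurd (hinj (hk.symm.trans h) : i₁ = i) (Ne.symm hne)
      rw [map_smul, coeff_of_lt_order k hlt, smul_zero]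
    · simp
  have hcoeff : (PowerSeries.coeff k) (g i₁) ≠ 0 := (order_eq_nat.mp hk.symm).1
  rw [hc, map_zero] at hck
  have hci₁ : c i₁ ≠ 0 := (Finset.mem_filter.mp hi₁s).2
  exact hcoeff ((mul_eq_zero.mp hck.symm).resolve_left hci₁)

lemma finrank_le_inf_ker {K M : Type*} [Field K] [AddCommGroup M] [Module K M]
    (p : Submodule K M) [FiniteDimensional K p] (φ : M →ₗ[K] K) :
    finrank K p ≤ finrank K (p ⊓ LinearMap.ker φ : Submodule K M) + 1 := by
  have h := LinearMap.finrank_range_add_finrank_ker (φ.comp p.subtype)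
  have hker : LinearMap.ker (φ.comp p.subtype)
      = Submodule.comap p.subtype (p ⊓ LinearMap.ker φ) := by
    ext x; simp [LinearMap.mem_ker, x.2]
  have h2 : finrank K (LinearMap.ker (φ.comp p.subtype))
      = finrank K (p ⊓ LinearMap.ker φ : Submodule K M) := by
    rw [hker]; exact (Submodule.comapSubtypeEquivOfLe inf_le_left).finrank_eq
  have h3 : finrank K (LinearMap.range (φ.comp p.subtype)) ≤ 1 := by
    simpa using Submodule.finrank_le (LinearMap.range (φ.comp p.subtype))
  omega

theorem exists_basis_change_distinct_orders
    {K : Type*} [Field K] [CharZero K] {n : ℕ}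
    (f : Fin n → K⟦X⟧) (hf : LinearIndependent K f) :
    ∃ A : Matrix (Fin n) (Fin n) K, IsUnit A.det ∧
      (∀ j, (∑ i, A i j • f i) ≠ 0) ∧
      Function.Injective (fun j => (∑ i, A i j • f i).order) := by
  classical
  rcases Nat.eq_zero_or_pos n with hn | hn
  · subst hn
    exact ⟨1, by simp, fun j => j.elim0, fun j => j.elim0⟩
  haveI : Nonempty (Fin n) := ⟨⟨0, hn⟩⟩
  set V : Submodule K K⟦X⟧ := Submodule.span K (Set.range f) with hV
  haveI : FiniteDimensional K V := FiniteDimensional.span_of_finite K (Set.finite_range f)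
  have hdim : finrank K V = n := by
    rw [hV, finrank_span_eq_card hf, Fintype.card_fin]
  set W : ℕ → Submodule K K⟦X⟧ :=
    fun d => V ⊓ ⨅ (i : ℕ) (_ : i < d), LinearMap.ker (PowerSeries.coeff i) with hWdef
  have hWmem : ∀ d x, x ∈ W d ↔ x ∈ V ∧ ∀ i < d, PowerSeries.coeff i x = 0 := by
    intro d x
    simp [hWdef, Submodule.mem_inf, Submodule.mem_iInf, LinearMap.mem_ker]
  have hWleV : ∀ d, W d ≤ V := fun d => inf_le_left
  have hWanti : ∀ {d e : ℕ}, d ≤ e → W e ≤ W d := by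
    intro d e hde x hx
    rw [hWmem] at hx ⊢
    exact ⟨hx.1, fun i hi => hx.2 i (lt_of_lt_of_le hi hde)⟩
  have hfd : ∀ d, FiniteDimensional K (W d) :=
    fun d => Submodule.finiteDimensional_of_le (hWleV d)
  set a : ℕ → ℕ := fun d => finrank K (W d) with ha
  have hcodim : ∀ d, a d ≤ a (d + 1) + 1 := by
    intro d
    haveI := hfd d
    have key : W (d + 1) = W d ⊓ LinearMap.ker (PowerSeries.coeff d) := by
      ext x
      rw [hWmem, Submodule.mem_inf, hWmem, LinearMap.mem_ker]
      constructor
      · rintro ⟨h1, h2⟩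
        exact ⟨⟨h1, fun i hi => h2 i (by omega)⟩, h2 d (by omega)⟩
      · rintro ⟨⟨h1, h2⟩, h3⟩
        refine ⟨h1, fun i hi => ?_⟩
        rcases Nat.lt_or_ge i d with h | h
        · exact h2 i h
        · have : i = d := by omega
          subst this; exact h3
      
    have := finrank_le_inf_ker (W d) (PowerSeries.coeff d)
    rw [← key] at this
    exact this
  have hanti : ∀ {d e : ℕ}, d ≤ e → a e ≤ a d := by
    intro d e hde
    haveI := hfd d
    exact Submodule.finrank_mono (hWanti hde)
  obtain ⟨D, hD⟩ : ∃ D, a D = sInf (Set.range a) := by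
    have := Nat.sInf_mem (Set.range_nonempty a)
    obtain ⟨D, hD⟩ := this
    exact ⟨D, hD⟩
  have hstab : ∀ d, D ≤ d → W d = W D := by
    intro d hd
    haveI := hfd D
    refine Submodule.eq_of_le_of_finrank_le (hWanti hd) ?_
    rw [show finrank K (W D) = a D from rfl, hD]
    exact Nat.sInf_le (Set.mem_range_self d)
  have hWD : W D = ⊥ := by
    rw [Submodule.eq_bot_iff]
    intro x hx
    apply PowerSeries.ext
    intro i
    have hx' : x ∈ W (D + i + 1) := by rw [hstab (D + i + 1) (by omega)]; exact hx
    rw [hWmem] at hx'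
    simpa using hx'.2 i (by omega)
  have haD : a D = 0 := by
    rw [show a D = finrank K (W D) from rfl, hWD, finrank_bot]
  -- counting
  have hcount : ∀ d, a 0 ≤ a d + ((Finset.range d).filter (fun t => a (t + 1) < a t)).card := by
    intro d
    induction d with
    | zero => simp
    | succ d ih =>
      rw [Finset.range_add_one, Finset.filter_insert]
      by_cases h : a (d + 1) < a d
      · rw [if_pos h, Finset.card_insert_of_notMem (by simp)]
        have := hcodim d
        omega
      · rw [if_neg h]
        have h2 : a d ≤ a (d + 1) := Nat.le_of_not_lt h
        omega
  have ha0 : a 0 = n := by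
    have hw0 : W 0 = V := by
      ext x; rw [hWmem]; simp
    rw [show a 0 = finrank K (W 0) from rfl, hw0, hdim]
  set S := (Finset.range D).filter (fun t => a (t + 1) < a t) with hS
  have hScard : n ≤ S.card := by
    have h := hcount D
    rw [← hS] at h
    omega
  obtain ⟨T, hTS, hTcard⟩ := S.exists_subset_card_eq hScard
  set dfun : Fin n → ℕ := fun j => ((T.orderIsoOfFin hTcard) j : ℕ) with hdfun
  have hdinj : Function.Injective dfun := by
    intro i j hij
    exact (T.orderIsoOfFin hTcard).injective (Subtype.ext hij)
  have hdS : ∀ j, dfun j ∈ S := fun j => hTS ((T.orderIsoOfFin hTcard) j).2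
  have hpick : ∀ d ∈ S, ∃ v, v ∈ W d ∧ v ∉ W (d + 1) := by
    intro d hd
    rw [hS, Finset.mem_filter] at hd
    by_contra hcon
    push_neg at hcon
    have hle : W d ≤ W (d + 1) := fun x hx => hcon x hx
    have : a d ≤ a (d + 1) := by
      haveI := hfd (d + 1)
      exact Submodule.finrank_mono hle
    omega
  set g : Fin n → K⟦X⟧ := fun j => (hpick (dfun j) (hdS j)).choose with hg
  have hgspec : ∀ j, g j ∈ W (dfun j) ∧ g j ∉ W (dfun j + 1) :=
    fun j => (hpick (dfun j) (hdS j)).choose_spec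
  have hgV : ∀ j, g j ∈ V := fun j => hWleV (dfun j) (hgspec j).1
  have horder : ∀ j, (g j).order = (dfun j : ℕ∞) := by
    intro j
    obtain ⟨h1, h2⟩ := hgspec j
    rw [hWmem] at h1
    rw [order_eq_nat]
    constructor
    · intro hcd
      apply h2
      rw [hWmem]
      refine ⟨h1.1, fun i hi => ?_⟩
      rcases Nat.lt_or_ge i (dfun j) with h | h
      · exact h1.2 i h
      · have : i = dfun j := by omega
        subst this; exact hcd
    · exact h1.2
  have hg0 : ∀ j, g j ≠ 0 := by
    intro j hj
    have := horder j
    rw [hj, order_zero] at this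
    exact (by simp : (⊤ : ℕ∞) ≠ (dfun j : ℕ∞)) this
  have hginj : Function.Injective (fun j => (g j).order) := by
    intro i j hij
    simp only [horder] at hij
    exact hdinj (Nat.cast_injective hij)
  have hgli : LinearIndependent K g := li_of_distinct_orders g hg0 hginj
  -- bases
  set f' : Fin n → V := fun i => ⟨f i, Submodule.subset_span (Set.mem_range_self i)⟩ with hf'
  set g' : Fin n → V := fun j => ⟨g j, hgV j⟩ with hg'
  have hf'li : LinearIndependent K f' := by
    apply LinearIndependent.of_comp V.subtype
    convert hf
    rfl
  have hg'li : LinearIndependent K g' := by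
    apply LinearIndependent.of_comp V.subtype
    convert hgli
    rfl
  have hcard : Fintype.card (Fin n) = finrank K V := by rw [Fintype.card_fin, hdim]
  set bf := basisOfLinearIndependentOfCardEqFinrank hf'li hcard with hbf
  set bg := basisOfLinearIndependentOfCardEqFinrank hg'li hcard with hbg
  have hbfc : ⇑bf = f' := coe_basisOfLinearIndependentOfCardEqFinrank hf'li hcard
  have hbgc : ⇑bg = g' := coe_basisOfLinearIndependentOfCardEqFinrank hg'li hcard
  set A := bf.toMatrix g' with hA
  have hdet : IsUnit A.det := by
    have : A = bf.toMatrix ⇑bg := by rw [hbgc]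
    rw [this]
    exact Matrix.isUnit_det_of_right_inverse (bf.toMatrix_mul_toMatrix_flip bg)
  have heq : ∀ j, (∑ i, A i j • f i) = g j := by
    intro j
    have h1 : ∑ i, A i j • bf i = g' j := bf.sum_toMatrix_smul_self g' j
    rw [hbfc] at h1
    have := congrArg (Subtype.val) h1
    simpa using this
  refine ⟨A, hdet, ?_, ?_⟩
  · intro j; rw [heq j]; exact hg0 j
  · intro i j hij
    simp only [heq] at hij
    exact hginj hij
end

section
/- If nonzero power series g_1,...,g_n ∈ K[[x]] have pairwise distinct orders d_1,...,d_n, then their Wronskian W(g_1,...,g_n) is nonzero and ord(W(g_1,...,g_n)) = d_1 + ... + d_n - n(n-1)/2. -/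
open PowerSeries

noncomputable def Wronskian {K : Type*} [Field K] {n : ℕ} (f : Fin n → K⟦X⟧) : K⟦X⟧ :=
  Matrix.det (Matrix.of fun i j : Fin n => (d⁄dX K)^[(i : ℕ)] (f j))

namespace WronskianAux

variable {K : Type*} [Field K]

lemma coeff_iterate_derivative (i : ℕ) (f : K⟦X⟧) (m : ℕ) :
    coeff m ((d⁄dX K)^[i] f) =
      (∏ t ∈ Finset.range i, ((m : K) + 1 + t)) * coeff (m + i) f := by
  induction i generalizing f with
  | zero => simp
  | succ i ih =>
    rw [Function.iterate_succ_apply, ih, coeff_derivative, Finset.prod_range_succ,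
      show m + (i + 1) = m + 1 + i by ring]
    push_cast
    ring_nf

lemma le_order_iterate (f : K⟦X⟧) (i e : ℕ) (h : (e : ℕ∞) ≤ f.order) :
    ((e - i : ℕ) : ℕ∞) ≤ ((d⁄dX K)^[i] f).order := by
  apply nat_le_order
  intro m hm
  rw [coeff_iterate_derivative]
  have hz : coeff (m + i) f = 0 := by
    apply coeff_of_lt_order
    exact lt_of_lt_of_le (by exact_mod_cast (by omega : m + i < e)) h
  rw [hz, mul_zero]

lemma le_order_prod {ι : Type*} (s : Finset ι) (f : ι → K⟦X⟧) (e : ι → ℕ)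
    (h : ∀ i ∈ s, (e i : ℕ∞) ≤ (f i).order) :
    ((∑ i ∈ s, e i : ℕ) : ℕ∞) ≤ (∏ i ∈ s, f i).order := by
  classical
  induction s using Finset.cons_induction with
  | empty => simp [order_one]
  | cons a s ha ih =>
    rw [Finset.prod_cons, Finset.sum_cons, Nat.cast_add]
    exact le_trans (add_le_add (h a (Finset.mem_cons_self a s))
      (ih fun i hi => h i (Finset.mem_cons_of_mem hi))) (le_order_mul _ _)

lemma coeff_prod_orders {ι : Type*} (s : Finset ι) (f : ι → K⟦X⟧) (e : ι → ℕ)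
    (h : ∀ i ∈ s, (e i : ℕ∞) ≤ (f i).order) :
    coeff (∑ i ∈ s, e i) (∏ i ∈ s, f i) = ∏ i ∈ s, coeff (e i) (f i) := by
  classical
  induction s using Finset.cons_induction with
  | empty => simp
  | cons a s ha ih =>
    rw [Finset.prod_cons, Finset.sum_cons, coeff_mul, Finset.prod_cons,
      ← ih (fun i hi => h i (Finset.mem_cons_of_mem hi))]
    apply Finset.sum_eq_single_of_mem (e a, ∑ i ∈ s, e i)
    · simp [Finset.mem_antidiagonal]
    · rintro ⟨p, q⟩ hpq hne
      have hsum : p + q = e a + ∑ i ∈ s, e i := Finset.HasAntidiagonal.mem_antidiagonal.mp hpq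
      rcases lt_or_ge p (e a) with hp | hp
      · rw [coeff_of_lt_order p (lt_of_lt_of_le (by exact_mod_cast hp)
          (h a (Finset.mem_cons_self a s))), zero_mul]
      · have hpe : p ≠ e a := by
          intro hcon
          exact hne (by simp [hcon]; omega)
        have hq : q < ∑ i ∈ s, e i := by omega
        rw [coeff_of_lt_order q (lt_of_lt_of_le (by exact_mod_cast hq)
          (le_order_prod s f e (fun i hi => h i (Finset.mem_cons_of_mem hi)))), mul_zero]

lemma sum_range_card_le (n : ℕ) : ∀ s : Finset ℕ, s.card = n →
    ∑ i ∈ Finset.range n, i ≤ ∑ x ∈ s, x := by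
  induction n with
  | zero => intro s hs; simp
  | succ n ih =>
    intro s hs
    have hne : s.Nonempty := Finset.card_pos.mp (by omega)
    set m := s.max' hne with hm
    have hmem : m ∈ s := s.max'_mem hne
    have hcard : (s.erase m).card = n := by rw [Finset.card_erase_of_mem hmem]; omega
    have hsub : s ⊆ Finset.range (m + 1) := fun x hx =>
      Finset.mem_range.mpr (Nat.lt_succ_of_le (s.le_max' x hx))
    have hnm : n ≤ m := by
      have := Finset.card_le_card hsub
      rw [hs, Finset.card_range] at this; omega
    have h1 := ih (s.erase m) hcard
    have h2 : ∑ x ∈ s.erase m, x + m = ∑ x ∈ s, x := Finset.sum_erase_add s _ hmem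
    rw [Finset.sum_range_succ]
    omega

lemma choose_two_le_sum {n : ℕ} (d : Fin n → ℕ) (hdist : Function.Injective d) :
    n.choose 2 ≤ ∑ i, d i := by
  classical
  have h1 : (Finset.univ.image d).card = n := by
    rw [Finset.card_image_of_injective _ hdist, Finset.card_univ, Fintype.card_fin]
  have h2 : ∑ x ∈ Finset.univ.image d, x = ∑ i, d i :=
    Finset.sum_image (fun x _ y _ h => hdist h)
  have h3 := sum_range_card_le n (Finset.univ.image d) h1
  rw [h2] at h3
  rw [Nat.choose_two_right, ← Finset.sum_range_id]
  exact h3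

lemma prod_range_eq_descPochhammer (k : ℕ) (x : K) :
    ∏ t ∈ Finset.range k, (x - t) = (descPochhammer K k).eval x := by
  induction k with
  | zero => simp
  | succ k ih => rw [descPochhammer_succ_eval, Finset.prod_range_succ, ih]

lemma const_eq (dd s : ℕ) (hs : s ≤ dd) :
    (∏ t ∈ Finset.range s, (((dd - s : ℕ) : K) + 1 + t)) =
      ∏ t ∈ Finset.range s, ((dd : K) - t) := by
  have hnat : ∏ t ∈ Finset.range s, (dd - s + 1 + t) = ∏ t ∈ Finset.range s, (dd - t) := by
    rw [← Finset.prod_range_reflect (fun t => dd - s + 1 + t) s]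
    apply Finset.prod_congr rfl
    intro t ht
    rw [Finset.mem_range] at ht
    omega
  calc (∏ t ∈ Finset.range s, (((dd - s : ℕ) : K) + 1 + t))
      = ((∏ t ∈ Finset.range s, (dd - s + 1 + t) : ℕ) : K) := by push_cast; ring_nf
    _ = ((∏ t ∈ Finset.range s, (dd - t) : ℕ) : K) := by rw [hnat]
    _ = ∏ t ∈ Finset.range s, ((dd : K) - t) := by
        push_cast
        apply Finset.prod_congr rfl
        intro t ht
        rw [Finset.mem_range] at ht
        rw [Nat.cast_sub (by omega)]

end WronskianAux

open WronskianAux in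
theorem wronskian_distinct_orders
    {K : Type*} [Field K] [CharZero K] {n : ℕ}
    (g : Fin n → K⟦X⟧) (hg : ∀ i, g i ≠ 0)
    (d : Fin n → ℕ) (hd : ∀ i, (g i).order = (d i : ℕ∞))
    (hdist : Function.Injective d) :
    Wronskian g ≠ 0 ∧
      (Wronskian g).order = ((∑ i, d i - n.choose 2 : ℕ) : ℕ∞) := by
  classical
  set N : ℕ := ∑ i, d i - n.choose 2 with hN
  have hC : n.choose 2 ≤ ∑ i, d i := choose_two_le_sum d hdist
  have hc : ∀ i, coeff (d i) (g i) ≠ 0 := fun i => (order_eq_nat.mp (hd i)).1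
  have hσsum : ∀ σ : Equiv.Perm (Fin n), ∑ i, ((σ i : ℕ)) = n.choose 2 := by
    intro σ
    rw [Equiv.sum_comp σ (fun i => (i : ℕ)), Fin.sum_univ_eq_sum_range (fun i => i) n,
      Nat.choose_two_right, Finset.sum_range_id]
  have horder : ∀ (σ : Equiv.Perm (Fin n)) (i : Fin n),
      ((d i - (σ i : ℕ) : ℕ) : ℕ∞) ≤ ((d⁄dX K)^[(σ i : ℕ)] (g i)).order :=
    fun σ i => le_order_iterate _ _ _ (le_of_eq (hd i).symm)
  -- coefficient of the Wronskian as a sum over permutations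
  have hWcoeff : ∀ m : ℕ, coeff m (Wronskian g) =
      ∑ σ : Equiv.Perm (Fin n),
        Equiv.Perm.sign σ • coeff m (∏ i, (d⁄dX K)^[(σ i : ℕ)] (g i)) := by
    intro m
    rw [Wronskian, Matrix.det_apply, map_sum]
    apply Finset.sum_congr rfl
    intro σ _
    rw [Units.smul_def, Units.smul_def, map_zsmul]
    rfl
  -- vanishing below N
  have hvanish : ∀ m < N, coeff m (Wronskian g) = 0 := by
    intro m hm
    rw [hWcoeff]
    apply Finset.sum_eq_zero
    intro σ _
    have hle : ∀ i ∈ Finset.univ, d i ≤ (σ i : ℕ) + (d i - (σ i : ℕ)) := fun i _ => by omega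
    have hsum : ∑ i, d i ≤ n.choose 2 + ∑ i, (d i - (σ i : ℕ)) := by
      calc ∑ i, d i ≤ ∑ i, ((σ i : ℕ) + (d i - (σ i : ℕ))) := Finset.sum_le_sum hle
        _ = n.choose 2 + ∑ i, (d i - (σ i : ℕ)) := by rw [Finset.sum_add_distrib, hσsum]
    have hmlt : m < ∑ i, (d i - (σ i : ℕ)) := by omega
    rw [coeff_of_lt_order _ (lt_of_lt_of_le (by exact_mod_cast hmlt)
      (le_order_prod Finset.univ _ _ (fun i _ => horder σ i)))]
    simp
  -- the matrix of leading data
  set A : Matrix (Fin n) (Fin n) K := Matrix.of fun r c =>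
    (∏ t ∈ Finset.range (r : ℕ), ((d c : K) - t)) * coeff (d c) (g c) with hA
  -- coefficient at N equals det A
  have hterm : ∀ σ : Equiv.Perm (Fin n),
      coeff N (∏ i, (d⁄dX K)^[(σ i : ℕ)] (g i)) = ∏ i, A (σ i) i := by
    intro σ
    by_cases hcase : ∀ i, (σ i : ℕ) ≤ d i
    · -- main case
      have hsum : ∑ i, (d i - (σ i : ℕ)) = N := by
        have : ∑ i, ((d i - (σ i : ℕ)) + (σ i : ℕ)) = ∑ i, d i :=
          Finset.sum_congr rfl fun i _ => by have := hcase i; omega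
        rw [Finset.sum_add_distrib, hσsum] at this
        omega
      rw [← hsum, coeff_prod_orders Finset.univ _ _ (fun i _ => horder σ i)]
      apply Finset.prod_congr rfl
      intro i _
      rw [WronskianAux.coeff_iterate_derivative, Nat.sub_add_cancel (hcase i), hA]
      simp only [Matrix.of_apply]
      rw [const_eq (d i) (σ i : ℕ) (hcase i)]
    · -- some derivative order exceeds d i : both sides vanish
      push_neg at hcase
      obtain ⟨i₀, hi₀⟩ := hcase
      have hstrict : ∑ i, d i < n.choose 2 + ∑ i, (d i - (σ i : ℕ)) := by
        have h1 : ∑ i, d i < ∑ i, ((σ i : ℕ) + (d i - (σ i : ℕ))) :=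
          Finset.sum_lt_sum (fun i _ => by omega)
            ⟨i₀, Finset.mem_univ i₀, by omega⟩
        rw [Finset.sum_add_distrib, hσsum] at h1
        exact h1
      have hmlt : N < ∑ i, (d i - (σ i : ℕ)) := by omega
      rw [coeff_of_lt_order _ (lt_of_lt_of_le (by exact_mod_cast hmlt)
        (le_order_prod Finset.univ _ _ (fun i _ => horder σ i)))]
      symm
      apply Finset.prod_eq_zero (Finset.mem_univ i₀)
      rw [hA]
      simp only [Matrix.of_apply]
      have : (∏ t ∈ Finset.range (σ i₀ : ℕ), ((d i₀ : K) - t)) = 0 := by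
        apply Finset.prod_eq_zero (Finset.mem_range.mpr hi₀)
        simp
      rw [this, zero_mul]
  have hdetA : coeff N (Wronskian g) = A.det := by
    rw [hWcoeff, Matrix.det_apply]
    apply Finset.sum_congr rfl
    intro σ _
    rw [hterm σ]
  -- compute det A via Vandermonde
  have hAform : A = Matrix.of fun r c : Fin n =>
      (coeff (d c) (g c)) * ((descPochhammer K (r : ℕ)).eval ((d c : ℕ) : K)) := by
    ext r c
    simp only [hA, Matrix.of_apply]
    rw [mul_comm, prod_range_eq_descPochhammer]
  have hdetB : (Matrix.of fun r c : Fin n =>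
      ((descPochhammer K (r : ℕ)).eval ((d c : ℕ) : K))).det =
      (Matrix.vandermonde fun i : Fin n => ((d i : ℕ) : K)).det := by
    rw [← Matrix.det_transpose]
    rw [Matrix.det_eval_matrixOfPolynomials_eq_det_vandermonde
      (fun i : Fin n => ((d i : ℕ) : K)) (fun i => descPochhammer K (i : ℕ))
      (fun i => descPochhammer_natDegree K (i : ℕ)) (fun i => monic_descPochhammer K (i : ℕ))]
    congr 1
  have hvand : (Matrix.vandermonde fun i : Fin n => ((d i : ℕ) : K)).det ≠ 0 := by
    rw [Matrix.det_vandermonde]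
    apply Finset.prod_ne_zero_iff.mpr
    intro i _
    apply Finset.prod_ne_zero_iff.mpr
    intro j hj
    rw [Finset.mem_Ioi] at hj
    have : d j ≠ d i := fun h => absurd (hdist h) (Fin.ne_of_gt hj)
    exact sub_ne_zero_of_ne (by exact_mod_cast this)
  have hcoeffN : coeff N (Wronskian g) ≠ 0 := by
    have hmr := Matrix.det_mul_row (fun c : Fin n => coeff (d c) (g c))
      (Matrix.of fun r c : Fin n => ((descPochhammer K (r : ℕ)).eval ((d c : ℕ) : K)))
    simp only [Matrix.of_apply] at hmr
    rw [hdetA, hAform, hmr]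
    rw [← hdetB] at hvand
    exact mul_ne_zero (Finset.prod_ne_zero_iff.mpr fun c _ => hc c) hvand
  refine ⟨fun h => hcoeffN (by rw [h, map_zero]), ?_⟩
  exact order_eq_nat.mpr ⟨hcoeffN, hvanish⟩
end

section
/- Let F be an n-dimensional subspace of K[[x]], and let d_1,...,d_n be the distinct orders of nonzero elements of F. Then for any basis (f_1,...,f_n) of F, ord(W(f_1,...,f_n)) = d_1 + ... + d_n - n(n-1)/2. -/
open PowerSeries

lemma coeff_iter_deriv {K : Type*} [Field K] (f : K⟦X⟧) (i k : ℕ) :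
    coeff k ((d⁄dX K)^[i] f) = coeff (k + i) f * ((k + i).descFactorial i : K) := by
  induction i generalizing f with
  | zero => simp
  | succ i ih =>
    rw [Function.iterate_succ_apply, ih, coeff_derivative]
    rw [show k + (i + 1) = (k + i) + 1 by ring, Nat.succ_descFactorial_succ]
    push_cast; ring

lemma strictMono_le {n : ℕ} {e : Fin n → ℕ} (he : StrictMono e) (i : Fin n) : (i : ℕ) ≤ e i := by
  obtain ⟨i, hi⟩ := i
  induction i with
  | zero => exact Nat.zero_le _
  | succ i ih =>
    have h1 : (⟨i, Nat.lt_of_succ_lt hi⟩ : Fin n) < ⟨i + 1, hi⟩ := by simp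
    exact Nat.lt_of_le_of_lt (ih (Nat.lt_of_succ_lt hi)) (he h1)

lemma sum_fin_id_eq_choose (n : ℕ) : ∑ i : Fin n, (i : ℕ) = n.choose 2 := by
  rw [Fin.sum_univ_eq_sum_range (fun i => i) n, Finset.sum_range_id, Nat.choose_two_right]

lemma choose_le_sum {n : ℕ} (d : Fin n → ℕ) (hd : Function.Injective d) :
    n.choose 2 ≤ ∑ i, d i := by
  set σ := Tuple.sort d
  have hmono : StrictMono (d ∘ σ) :=
    (Tuple.monotone_sort d).strictMono_of_injective (hd.comp σ.injective)
  have h2 : ∑ i, (d ∘ σ) i = ∑ i, d i := Equiv.sum_comp σ d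
  have h3 : ∑ i : Fin n, (i : ℕ) ≤ ∑ i, (d ∘ σ) i :=
    Finset.sum_le_sum fun i _ => strictMono_le hmono i
  have h4 := sum_fin_id_eq_choose n
  omega

lemma sum_perm_eq_choose {n : ℕ} (σ : Equiv.Perm (Fin n)) :
    ∑ i : Fin n, ((σ i : ℕ)) = n.choose 2 := by
  rw [← sum_fin_id_eq_choose n]
  exact Equiv.sum_comp σ (fun i : Fin n => (i : ℕ))

lemma order_wronskian_of_orders {K : Type*} [Field K] [CharZero K] {n : ℕ}
    (d : Fin n → ℕ) (hdist : Function.Injective d) (g : Fin n → K⟦X⟧)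
    (hg : ∀ j, (g j).order = (d j : ℕ∞)) :
    (Wronskian g).order = ((∑ i, d i - n.choose 2 : ℕ) : ℕ∞) := by
  classical
  set N := ∑ i, d i - n.choose 2 with hNdef
  have hN : N + n.choose 2 = ∑ i, d i := Nat.sub_add_cancel (choose_le_sum d hdist)
  have hzero : ∀ j k, k < d j → coeff k (g j) = 0 := fun j k hk =>
    coeff_of_lt_order k (by rw [hg j]; exact_mod_cast hk)
  have hlead : ∀ j, coeff (d j) (g j) ≠ 0 := fun j => (order_eq_nat.mp (hg j)).1
  have hterm0 : ∀ (σ : Equiv.Perm (Fin n)) (l : Fin n →₀ ℕ), (∃ i, l i + (σ i : ℕ) < d i) →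
      ∏ i, coeff (l i) ((d⁄dX K)^[(σ i : ℕ)] (g i)) = 0 := by
    intro σ l ⟨i, hi⟩
    apply Finset.prod_eq_zero (Finset.mem_univ i)
    rw [coeff_iter_deriv, hzero i _ hi, zero_mul]
  have claim_lt : ∀ (σ : Equiv.Perm (Fin n)) (m : ℕ), m < N →
      coeff m (∏ i, (d⁄dX K)^[(σ i : ℕ)] (g i)) = 0 := by
    intro σ m hm
    rw [coeff_prod]
    apply Finset.sum_eq_zero
    intro l hl
    rw [Finset.mem_finsuppAntidiag] at hl
    apply hterm0
    by_contra h
    push_neg at h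
    have h1 : ∑ i, d i ≤ ∑ i, (l i + (σ i : ℕ)) := Finset.sum_le_sum fun i _ => h i
    rw [Finset.sum_add_distrib, sum_perm_eq_choose, hl.1] at h1
    omega
  have claim_N : ∀ (σ : Equiv.Perm (Fin n)),
      coeff N (∏ i, (d⁄dX K)^[(σ i : ℕ)] (g i))
        = (∏ i, ((d i).descFactorial (σ i) : K)) * ∏ i, coeff (d i) (g i) := by
    intro σ
    rw [coeff_prod]
    by_cases hσ : ∀ i, (σ i : ℕ) ≤ d i
    · set l₀ : Fin n →₀ ℕ := Finsupp.equivFunOnFinite.symm (fun i => d i - (σ i : ℕ)) with hl₀def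
      have hl₀app : ∀ i, l₀ i = d i - (σ i : ℕ) := fun i => rfl
      have hl₀sum : ∑ i, l₀ i = N := by
        simp only [hl₀app]
        rw [Finset.sum_tsub_distrib _ (fun i _ => hσ i), sum_perm_eq_choose]
      have hmem : l₀ ∈ Finset.finsuppAntidiag Finset.univ N :=
        Finset.mem_finsuppAntidiag.mpr ⟨hl₀sum, Finset.subset_univ _⟩
      rw [Finset.sum_eq_single_of_mem l₀ hmem ?_]
      · rw [← Finset.prod_mul_distrib]
        apply Finset.prod_congr rfl
        intro i _
        rw [hl₀app, coeff_iter_deriv, Nat.sub_add_cancel (hσ i)]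
        exact mul_comm _ _
      · intro l hl hne
        rw [Finset.mem_finsuppAntidiag] at hl
        apply hterm0
        by_contra h
        push_neg at h
        have hle : ∀ i ∈ Finset.univ, l₀ i ≤ l i := fun i _ => by
          have := h i; have := hσ i; rw [hl₀app]; omega
        have hsum : ∑ i, l₀ i = ∑ i, l i := by rw [hl₀sum, hl.1]
        have heq := (Finset.sum_eq_sum_iff_of_le hle).mp hsum
        exact hne (Finsupp.ext fun i => (heq i (Finset.mem_univ i)).symm)
    · push_neg at hσ
      obtain ⟨i₀, hi₀⟩ := hσ
      have hz : ((d i₀).descFactorial (σ i₀) : K) = 0 := by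
        rw [Nat.descFactorial_eq_zero_iff_lt.mpr hi₀]; simp
      rw [Finset.prod_eq_zero (Finset.mem_univ i₀) hz, zero_mul]
      apply Finset.sum_eq_zero
      intro l hl
      rw [Finset.mem_finsuppAntidiag] at hl
      apply hterm0
      by_contra h
      push_neg at h
      have hsum : ∑ i, d i = ∑ i, (l i + (σ i : ℕ)) := by
        rw [Finset.sum_add_distrib, sum_perm_eq_choose, hl.1, hN]
      have heq := (Finset.sum_eq_sum_iff_of_le (fun i _ => h i)).mp hsum
      have := heq i₀ (Finset.mem_univ i₀)
      omega
  -- expand determinant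
  have hdet : ∀ m : ℕ, coeff m (Wronskian g)
      = ∑ σ : Equiv.Perm (Fin n),
          ((Equiv.Perm.sign σ : ℤ) : K) * coeff m (∏ i, (d⁄dX K)^[(σ i : ℕ)] (g i)) := by
    intro m
    rw [Wronskian, Matrix.det_apply', map_sum]
    apply Finset.sum_congr rfl
    intro σ _
    rw [show ((Equiv.Perm.sign σ : ℤ) : K⟦X⟧) = C ((Equiv.Perm.sign σ : ℤ) : K) by
      rw [map_intCast], coeff_C_mul]
    rfl
  have hcoeffN : coeff N (Wronskian g)
      = (Matrix.of fun i j : Fin n => ((d j).descFactorial (i : ℕ) : K)).det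
          * ∏ i, coeff (d i) (g i) := by
    rw [hdet, Matrix.det_apply', Finset.sum_mul]
    simp only [Matrix.of_apply]
    apply Finset.sum_congr rfl
    intro σ _
    rw [claim_N σ, mul_assoc]
  have hvdm : (Matrix.of fun i j : Fin n => ((d j).descFactorial (i : ℕ) : K)).det ≠ 0 := by
    have ht : (Matrix.of fun i j : Fin n => ((d j).descFactorial (i : ℕ) : K))
        = (Matrix.of fun i j : Fin n => (descPochhammer K (j : ℕ)).eval ((d i : K))).transpose := by
      ext i j
      simp [Matrix.transpose_apply, Matrix.of_apply, descPochhammer_eval_eq_descFactorial]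
    rw [ht, Matrix.det_transpose,
      ← Matrix.det_eval_matrixOfPolynomials_eq_det_vandermonde (fun i => (d i : K))
        (fun i : Fin n => descPochhammer K (i : ℕ))
        (fun i => descPochhammer_natDegree K (i : ℕ))
        (fun i => monic_descPochhammer K (i : ℕ))]
    exact Matrix.det_vandermonde_ne_zero_iff.mpr fun a b hab =>
      hdist (Nat.cast_injective hab)
  rw [order_eq_nat]
  constructor
  · rw [hcoeffN]
    exact mul_ne_zero hvdm (Finset.prod_ne_zero_iff.mpr fun i _ => hlead i)
  · intro m hm
    rw [hdet]
    apply Finset.sum_eq_zero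
    intro σ _
    rw [claim_lt σ m hm, mul_zero]

theorem order_wronskian_eq_sum_orders
    {K : Type*} [Field K] [CharZero K] {n : ℕ}
    (F : Submodule K K⟦X⟧) (d : Fin n → ℕ) (hdist : Function.Injective d)
    (hd : ∀ m : ℕ, (∃ f ∈ F, f ≠ 0 ∧ f.order = (m : ℕ∞)) ↔ ∃ i, d i = m)
    (b : Module.Basis (Fin n) K F) :
    (Wronskian (fun i => (b i : K⟦X⟧))).order
      = ((∑ i, d i - n.choose 2 : ℕ) : ℕ∞) := by
  classical
  rcases Nat.eq_zero_or_pos n with hn | hn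
  · subst hn
    simp [Wronskian, Matrix.det_fin_zero, order_one]
  haveI : Nonempty (Fin n) := ⟨⟨0, hn⟩⟩
  -- choose elements of each order
  have hex : ∀ i : Fin n, ∃ f ∈ F, f ≠ 0 ∧ f.order = (d i : ℕ∞) := fun i =>
    (hd (d i)).mpr ⟨i, rfl⟩
  choose g hmem hne horder using hex
  have hlead : ∀ j, coeff (d j) (g j) ≠ 0 := fun j => (order_eq_nat.mp (horder j)).1
  -- linear independence
  have hli : LinearIndependent K g := by
    rw [Fintype.linearIndependent_iff]
    intro c hc
    by_contra hcn
    push_neg at hcn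
    obtain ⟨i, hi⟩ := hcn
    have hSne : (Finset.univ.filter fun i => c i ≠ 0).Nonempty :=
      ⟨i, Finset.mem_filter.mpr ⟨Finset.mem_univ i, hi⟩⟩
    obtain ⟨i₀, hi₀S, hi₀min⟩ := Finset.exists_min_image _ d hSne
    have hci₀ : c i₀ ≠ 0 := (Finset.mem_filter.mp hi₀S).2
    have h0 : coeff (d i₀) (∑ i, c i • g i) = 0 := by rw [hc]; simp
    rw [map_sum] at h0
    rw [Finset.sum_eq_single i₀ ?_ (by simp)] at h0
    · simp only [map_smul, smul_eq_mul] at h0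
      exact hci₀ (by
        rcases mul_eq_zero.mp h0 with h | h
        · exact h
        · exact absurd h (hlead i₀))
    · intro i _ hne'
      rcases eq_or_ne (c i) 0 with h | h
      · rw [h, zero_smul, map_zero]
      · have hiS : i ∈ Finset.univ.filter fun i => c i ≠ 0 :=
          Finset.mem_filter.mpr ⟨Finset.mem_univ i, h⟩
        have hlt : d i₀ < d i :=
          lt_of_le_of_ne (hi₀min i hiS) fun he => hne' (hdist he).symm
        rw [map_smul, coeff_of_lt_order (d i₀) (by rw [horder i]; exact_mod_cast hlt),
          smul_zero]
  -- upgrade to a basis of F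
  set gF : Fin n → F := fun i => ⟨g i, hmem i⟩ with hgFdef
  have hliF : LinearIndependent K gF :=
    LinearIndependent.of_comp F.subtype (by
      convert hli using 1
      rfl)
  haveI : Module.Finite K F := Module.Finite.of_basis b
  have hcard : Fintype.card (Fin n) = Module.finrank K F := by
    rw [Module.finrank_eq_card_basis b]
  set gb : Module.Basis (Fin n) K F := basisOfLinearIndependentOfCardEqFinrank hliF hcard with hgbdef
  have hgb : ∀ i, (gb i : K⟦X⟧) = g i := by
    intro i
    rw [hgbdef, coe_basisOfLinearIndependentOfCardEqFinrank]
  set A : Matrix (Fin n) (Fin n) K := gb.toMatrix ⇑b with hAdef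
  have hbg : ∀ j, (b j : K⟦X⟧) = ∑ k, A k j • g k := by
    intro j
    have h1 := Module.Basis.sum_toMatrix_smul_self gb ⇑b j
    have h2 := congrArg (F.subtype) h1
    rw [map_sum] at h2
    simp only [Submodule.coe_subtype, SetLike.val_smul] at h2 ⊢
    rw [← h2]
    apply Finset.sum_congr rfl
    intro k _
    rw [hgb k]
  -- iterated derivative is linear
  have hiter : ∀ (m : ℕ) (f : K⟦X⟧), (d⁄dX K)^[m] f = (((d⁄dX K : K⟦X⟧ →ₗ[K] K⟦X⟧)) ^ m) f :=
    fun m f => (Module.End.pow_apply _ _ _).symm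
  have hD : ∀ (m : ℕ) (j : Fin n),
      (d⁄dX K)^[m] ((b j : K⟦X⟧)) = ∑ k, C (A k j) * (d⁄dX K)^[m] (g k) := by
    intro m j
    rw [hbg j, hiter, map_sum]
    apply Finset.sum_congr rfl
    intro k _
    rw [map_smul, ← hiter, smul_eq_C_mul]
  -- Wronskian transformation
  have hW : Wronskian (fun i => (b i : K⟦X⟧)) = Wronskian g * C A.det := by
    have hmat : (Matrix.of fun i j : Fin n => (d⁄dX K)^[(i : ℕ)] ((b j : K⟦X⟧)))
        = (Matrix.of fun i j : Fin n => (d⁄dX K)^[(i : ℕ)] (g j)) * A.map (C : K →+* K⟦X⟧) := by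
      ext i j : 2
      rw [Matrix.mul_apply]
      simp only [Matrix.of_apply, Matrix.map_apply]
      rw [hD]
      congr 1
      exact Finset.sum_congr rfl fun k _ => mul_comm _ _
    rw [Wronskian, hmat, Matrix.det_mul, Wronskian]
    congr 1
    rw [← RingHom.mapMatrix_apply, ← RingHom.map_det]
  have hdetA : A.det ≠ 0 := by
    haveI := gb.invertibleToMatrix b
    exact IsUnit.ne_zero ((Matrix.isUnit_iff_isUnit_det A).mp (isUnit_of_invertible A))
  have horderC : (C A.det).order = (0 : ℕ∞) := by
    rw [show ((0 : ℕ∞)) = ((0 : ℕ) : ℕ∞) by rfl, order_eq_nat]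
    refine ⟨by simpa using hdetA, by omega⟩
  rw [hW, order_mul, horderC, add_zero]
  exact order_wronskian_of_orders d hdist g horder
end

section
/- Let F be an n-dimensional linear subspace of K[[x]]. Then every nonzero f ∈ F satisfies ord(f) ≤ ord(W(f_1,...,f_n)) + n - 1, where (f_1,...,f_n) is any basis of F (in particular the Wronskian of a basis of F is nonzero). -/
open PowerSeries

open Finset

lemma coeff_iterate_derivative {K : Type*} [Field K] (f : K⟦X⟧) (k m : ℕ) :
    coeff m ((d⁄dX K)^[k] f) = ((m + k).descFactorial k : K) * coeff (m + k) f := by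
  induction k generalizing f with
  | zero => simp
  | succ k ih =>
    rw [Function.iterate_succ_apply, ih, coeff_derivative]
    have : m + k + 1 = m + (k + 1) := by omega
    rw [← this, Nat.succ_descFactorial_succ]
    push_cast
    ring

lemma coeff_iterate_derivative_eq_zero {K : Type*} [Field K] {f : K⟦X⟧} {d : ℕ}
    (hf : ∀ i < d, coeff i f = 0) {k m : ℕ} (h : m + k < d) :
    coeff m ((d⁄dX K)^[k] f) = 0 := by
  rw [_root_.coeff_iterate_derivative, hf _ h, mul_zero]

lemma coeff_prod_iter {K : Type*} [Field K] {n : ℕ} (g : Fin n → K⟦X⟧) (d : Fin n → ℕ)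
    (hg : ∀ j, ∀ i < d j, coeff i (g j) = 0) (σ : Equiv.Perm (Fin n)) (m : ℕ) :
    (m + ∑ j, ((σ j : ℕ)) < ∑ j, d j →
      coeff m (∏ j, (d⁄dX K)^[(σ j : ℕ)] (g j)) = 0)
    ∧ (m + ∑ j, ((σ j : ℕ)) = ∑ j, d j →
      coeff m (∏ j, (d⁄dX K)^[(σ j : ℕ)] (g j)) =
        ∏ j, (((d j).descFactorial (σ j) : K) * coeff (d j) (g j))) := by
  rw [coeff_prod]
  have key : ∀ l ∈ finsuppAntidiag (univ : Finset (Fin n)) m, (∃ j, l j + (σ j : ℕ) < d j) →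
      ∏ j, coeff (l j) ((d⁄dX K)^[(σ j : ℕ)] (g j)) = 0 := by
    intro l _ ⟨j, hj⟩
    exact Finset.prod_eq_zero (mem_univ j) (coeff_iterate_derivative_eq_zero (hg j) hj)
  have hsum : ∀ l ∈ finsuppAntidiag (univ : Finset (Fin n)) m, ∑ j, l j = m := by
    intro l hl
    exact ((Finset.mem_finsuppAntidiag).mp hl).1
  constructor
  · intro hlt
    apply Finset.sum_eq_zero
    intro l hl
    apply key l hl
    by_contra hc
    push_neg at hc
    have : ∑ j, d j ≤ ∑ j, (l j + (σ j : ℕ)) := Finset.sum_le_sum (fun j _ => hc j)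
    rw [Finset.sum_add_distrib, hsum l hl] at this
    omega
  · intro heq
    by_cases hall : ∀ j, (σ j : ℕ) ≤ d j
    · set l0 : Fin n →₀ ℕ := Finsupp.equivFunOnFinite.symm (fun j => d j - (σ j : ℕ)) with hl0
      have hl0app : ∀ j, l0 j = d j - (σ j : ℕ) := fun j => rfl
      have hsum0 : ∑ j, l0 j = m := by
        have : ∑ j, (l0 j + (σ j : ℕ)) = ∑ j, d j := by
          apply Finset.sum_congr rfl
          intro j _
          rw [hl0app j]
          have := hall j
          omega
        rw [Finset.sum_add_distrib] at this
        omega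
      have hmem : l0 ∈ finsuppAntidiag (univ : Finset (Fin n)) m := by
        rw [Finset.mem_finsuppAntidiag]
        exact ⟨hsum0, subset_univ _⟩
      rw [Finset.sum_eq_single_of_mem l0 hmem]
      · apply Finset.prod_congr rfl
        intro j _
        rw [hl0app j, _root_.coeff_iterate_derivative, Nat.sub_add_cancel (hall j)]
      · intro l hl hne
        apply key l hl
        by_contra hc
        push_neg at hc
        have hle : ∀ j, l j + (σ j : ℕ) = d j := by
          by_contra hc2
          push_neg at hc2
          obtain ⟨j0, hj0⟩ := hc2
          have : ∑ j, d j < ∑ j, (l j + (σ j : ℕ)) :=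
            Finset.sum_lt_sum (fun j _ => hc j) ⟨j0, mem_univ j0, lt_of_le_of_ne (hc j0) (Ne.symm hj0)⟩
          rw [Finset.sum_add_distrib, hsum l hl] at this
          omega
        apply hne
        ext j
        rw [hl0app j]
        have := hle j
        omega
    · push_neg at hall
      obtain ⟨j0, hj0⟩ := hall
      rw [Finset.sum_eq_zero, eq_comm]
      · apply Finset.prod_eq_zero (mem_univ j0)
        rw [Nat.descFactorial_eq_zero_iff_lt.mpr hj0]
        simp
      · intro l hl
        apply key l hl
        by_contra hc
        push_neg at hc
        have hlt : ∑ j, d j < ∑ j, (l j + (σ j : ℕ)) :=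
          Finset.sum_lt_sum (fun j _ => hc j) ⟨j0, mem_univ j0, by have := hc j0; omega⟩
        rw [Finset.sum_add_distrib, hsum l hl] at hlt
        omega

lemma wronskian_order {K : Type*} [Field K] [CharZero K] {n : ℕ} (g : Fin n → K⟦X⟧)
    (d : Fin n → ℕ) (hmono : StrictMono d) (hord : ∀ j, (g j).order = d j) :
    Wronskian g ≠ 0 ∧
      (Wronskian g).order = (((∑ j, d j) - ∑ j : Fin n, (j : ℕ) : ℕ) : ℕ∞) := by
  have hc : ∀ j, coeff (d j) (g j) ≠ 0 := fun j => (order_eq_nat.mp (hord j)).1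
  have hg : ∀ j, ∀ i < d j, coeff i (g j) = 0 := fun j => (order_eq_nat.mp (hord j)).2
  have hdj : ∀ j : Fin n, (j : ℕ) ≤ d j := by
    have key : ∀ k : ℕ, ∀ j : Fin n, (j : ℕ) = k → k ≤ d j := by
      intro k
      induction k with
      | zero => intro j _; exact Nat.zero_le _
      | succ k ih =>
        intro j hj
        have hk : k < n := by have := j.isLt; omega
        have h1 : k ≤ d ⟨k, hk⟩ := ih ⟨k, hk⟩ rfl
        have h2 : d ⟨k, hk⟩ < d j := hmono (by simp [Fin.lt_def, hj])
        omega
    exact fun j => key (j : ℕ) j rfl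
  have hsle : (∑ j : Fin n, (j : ℕ)) ≤ ∑ j, d j :=
    Finset.sum_le_sum (fun j _ => hdj j)
  set N : ℕ := (∑ j, d j) - ∑ j : Fin n, (j : ℕ) with hNdef
  have hN : N + (∑ j : Fin n, (j : ℕ)) = ∑ j, d j := by omega
  have hperm : ∀ σ : Equiv.Perm (Fin n), (∑ j : Fin n, ((σ j : ℕ))) = ∑ j : Fin n, (j : ℕ) :=
    fun σ => Equiv.sum_comp σ (fun i : Fin n => (i : ℕ))
  have hmatentry : ∀ (σ : Equiv.Perm (Fin n)) i,
      (Matrix.of fun i j : Fin n => (d⁄dX K)^[(i : ℕ)] (g j)) (σ i) i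
        = (d⁄dX K)^[(σ i : ℕ)] (g i) := fun σ i => rfl
  have hlow : ∀ m < N, coeff m (Wronskian g) = 0 := by
    intro m hm
    rw [Wronskian, Matrix.det_apply, map_sum]
    apply Finset.sum_eq_zero
    intro σ _
    rw [Units.smul_def, map_zsmul]
    have h0 := (coeff_prod_iter g d hg σ m).1 (by rw [hperm σ]; omega)
    simp only [hmatentry σ]
    rw [h0, smul_zero]
  have hcoeffN : coeff N (Wronskian g) =
      (∏ j, coeff (d j) (g j)) *
        (Matrix.of fun i j : Fin n => ((d j).descFactorial i : K)).det := by
    rw [Wronskian, Matrix.det_apply, map_sum, Matrix.det_apply, Finset.mul_sum]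
    apply Finset.sum_congr rfl
    intro σ _
    rw [Units.smul_def, map_zsmul, Units.smul_def]
    simp only [hmatentry σ]
    rw [(coeff_prod_iter g d hg σ N).2 (by rw [hperm σ]; omega)]
    rw [Finset.prod_mul_distrib, zsmul_eq_mul, zsmul_eq_mul]
    simp only [Matrix.of_apply]
    ring
  have hdetA : (Matrix.of fun i j : Fin n => ((d j).descFactorial i : K)).det ≠ 0 := by
    have h1 : (Matrix.of fun i j : Fin n => ((d j).descFactorial i : K)) =
        (Matrix.of fun i j : Fin n =>
          Polynomial.eval ((d i : K)) (descPochhammer K (j : ℕ))).transpose := by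
      ext i j
      simp [Matrix.transpose_apply, descPochhammer_eval_eq_descFactorial]
    rw [h1, Matrix.det_transpose,
      ← Matrix.det_eval_matrixOfPolynomials_eq_det_vandermonde (fun i : Fin n => ((d i : K)))
        (fun j : Fin n => descPochhammer K (j : ℕ))
        (fun i => descPochhammer_natDegree _ _) (fun i => monic_descPochhammer _ _)]
    exact Matrix.det_vandermonde_ne_zero_iff.mpr
      (fun a b hab => hmono.injective (Nat.cast_injective hab))
  have hNne : coeff N (Wronskian g) ≠ 0 := by
    rw [hcoeffN]
    exact mul_ne_zero (Finset.prod_ne_zero_iff.mpr (fun j _ => hc j)) hdetA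
  refine ⟨fun h => hNne (by rw [h, map_zero]), order_eq_nat.mpr ⟨hNne, hlow⟩⟩

lemma linearIndependent_of_order_inj {K : Type*} [Field K] {ι : Type*} [Fintype ι]
    (v : ι → K⟦X⟧) (h0 : ∀ i, v i ≠ 0)
    (hinj : Function.Injective fun i => (v i).order) :
    LinearIndependent K v := by
  rw [Fintype.linearIndependent_iff]
  intro a ha
  by_contra hc
  push_neg at hc
  obtain ⟨i0, hi0⟩ := hc
  classical
  set s : Finset ι := Finset.univ.filter (fun i => a i ≠ 0) with hs
  have hsne : s.Nonempty := ⟨i0, by simp [hs, hi0]⟩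
  obtain ⟨j, hjs, hjmin⟩ := Finset.exists_min_image s (fun i => (v i).order) hsne
  have hj0 : a j ≠ 0 := (Finset.mem_filter.mp hjs).2
  have hvj : (v j).order ≠ ⊤ := fun h => h0 j (order_eq_top.mp h)
  set t := (v j).order.toNat with ht
  have htt : (v j).order = (t : ℕ∞) := (ENat.coe_toNat hvj).symm
  have hco := congrArg (coeff t) ha
  rw [map_sum, map_zero] at hco
  rw [Finset.sum_eq_single j] at hco
  · rw [LinearMap.map_smul, smul_eq_mul] at hco
    have hcj : coeff t (v j) ≠ 0 := (order_eq_nat.mp htt).1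
    rcases mul_eq_zero.mp hco with h | h
    · exact hj0 h
    · exact hcj h
  · intro i _ hij
    by_cases hai : a i = 0
    · rw [hai, zero_smul, map_zero]
    · have his : i ∈ s := by simp [hs, hai]
      have : (v j).order < (v i).order :=
        lt_of_le_of_ne (hjmin i his) (fun h => hij (hinj h.symm))
      rw [LinearMap.map_smul, coeff_of_lt_order t (htt ▸ this), smul_zero]
  · intro h
    exact absurd (Finset.mem_univ j) h

lemma strictMono_fin_val_le {n : ℕ} {d : Fin n → ℕ} (hmono : StrictMono d) :
    ∀ j : Fin n, (j : ℕ) ≤ d j := by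
  have key : ∀ k : ℕ, ∀ j : Fin n, (j : ℕ) = k → k ≤ d j := by
    intro k
    induction k with
    | zero => intro j _; exact Nat.zero_le _
    | succ k ih =>
      intro j hj
      have hk : k < n := by have := j.isLt; omega
      have h1 : k ≤ d ⟨k, hk⟩ := ih ⟨k, hk⟩ rfl
      have h2 : d ⟨k, hk⟩ < d j := hmono (by simp [Fin.lt_def, hj])
      omega
  exact fun j => key (j : ℕ) j rfl

lemma iterate_derivative_sum_smul {K : Type*} [Field K] {ι : Type*} (s : Finset ι)
    (c : ι → K) (v : ι → K⟦X⟧) (i : ℕ) :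
    (d⁄dX K)^[i] (∑ k ∈ s, c k • v k) = ∑ k ∈ s, c k • (d⁄dX K)^[i] (v k) := by
  have hco : ∀ p : K⟦X⟧,
      (d⁄dX K)^[i] p = ((((d⁄dX K) : Derivation K K⟦X⟧ K⟦X⟧) : K⟦X⟧ →ₗ[K] K⟦X⟧) ^ i) p := by
    intro p
    rw [Module.End.pow_apply, Derivation.coeFn_coe]
  simp only [hco, map_sum, map_smul]

theorem order_le_order_wronskian_add
    {K : Type*} [Field K] [CharZero K] {n : ℕ}
    (F : Submodule K K⟦X⟧) (b : Module.Basis (Fin n) K F)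
    (f : K⟦X⟧) (hfF : f ∈ F) (hf : f ≠ 0) :
    Wronskian (fun i => (b i : K⟦X⟧)) ≠ 0 ∧
      f.order ≤ (Wronskian (fun i => (b i : K⟦X⟧))).order + (n - 1 : ℕ) := by
  classical
  rcases Nat.eq_zero_or_pos n with hn | hn
  · subst hn
    exfalso
    apply hf
    have h0 : (⟨f, hfF⟩ : F) = 0 := b.repr.injective (by ext i; exact i.elim0)
    exact congrArg Subtype.val h0
  haveI : FiniteDimensional K F := Module.Finite.of_basis b
  have hrank : Module.finrank K F = n := by
    rw [Module.finrank_eq_card_basis b, Fintype.card_fin]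
  set Tset : Set ℕ := {t | ∃ h : K⟦X⟧, h ∈ F ∧ h ≠ 0 ∧ h.order = (t : ℕ∞)} with hTset
  have cardbound : ∀ s : Finset ℕ, ↑s ⊆ Tset → s.card ≤ n := by
    intro s hsub
    have hmem : ∀ t : {x // x ∈ s}, ∃ h : K⟦X⟧, h ∈ F ∧ h ≠ 0 ∧ h.order = ((t : ℕ) : ℕ∞) :=
      fun t => hsub t.2
    choose w hwF hw0 hword using hmem
    have hind : LinearIndependent K w := by
      apply linearIndependent_of_order_inj w hw0
      intro t1 t2 h12
      simp only at h12
      rw [hword t1, hword t2] at h12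
      exact Subtype.ext (Nat.cast_injective h12)
    let wF : {x // x ∈ s} → F := fun t => ⟨w t, hwF t⟩
    have hindF : LinearIndependent K wF := LinearIndependent.of_comp F.subtype hind
    calc s.card = Fintype.card {x // x ∈ s} := (Fintype.card_coe s).symm
    _ ≤ Module.finrank K F := hindF.fintype_card_le_finrank
    _ = n := hrank
  have hTfin : Tset.Finite := by
    by_contra hinf
    obtain ⟨s, hsub, hcard⟩ := Set.Infinite.exists_subset_card_eq hinf (n + 1)
    have := cardbound s hsub
    omega
  set T : Finset ℕ := hTfin.toFinset with hT
  have hTsub : ↑T ⊆ Tset := by simp [hT]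
  have hcard_le : T.card ≤ n := cardbound T hTsub
  let Φ : F →ₗ[K] ({x // x ∈ T} → K) :=
    LinearMap.pi (fun t => (coeff (t : ℕ)) ∘ₗ F.subtype)
  have hΦinj : Function.Injective Φ := by
    rw [injective_iff_map_eq_zero]
    intro x hx
    by_contra hx0
    have hxv : (x : K⟦X⟧) ≠ 0 := fun h => hx0 (Subtype.ext h)
    have hord : (x : K⟦X⟧).order ≠ ⊤ := fun h => hxv (order_eq_top.mp h)
    set t0 := (x : K⟦X⟧).order.toNat with ht0
    have htT : t0 ∈ T := by
      rw [hT, Set.Finite.mem_toFinset]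
      exact ⟨x, x.2, hxv, (ENat.coe_toNat hord).symm⟩
    have hc0 : coeff t0 (x : K⟦X⟧) ≠ 0 := (order_eq_nat.mp (ENat.coe_toNat hord).symm).1
    have hzero := congrFun hx ⟨t0, htT⟩
    simp only [Φ, LinearMap.pi_apply, LinearMap.comp_apply, Submodule.coe_subtype,
      Pi.zero_apply] at hzero
    exact hc0 hzero
  have hcard_ge : n ≤ T.card := by
    have h1 := LinearMap.finrank_le_finrank_of_injective hΦinj
    rw [hrank, Module.finrank_pi, Fintype.card_coe] at h1
    exact h1
  have hcard : T.card = n := le_antisymm hcard_le hcard_ge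
  set iso := T.orderIsoOfFin hcard with hiso
  set d : Fin n → ℕ := fun j => (iso j : ℕ) with hd
  have hmono : StrictMono d := fun a c hac => Subtype.coe_lt_coe.mpr (iso.strictMono hac)
  have hdmemT : ∀ j, d j ∈ T := fun j => (iso j).2
  have hdmem : ∀ j, d j ∈ Tset := fun j => hTsub (hdmemT j)
  choose g hgF hg0 hgord using hdmem
  have hind : LinearIndependent K g := by
    apply linearIndependent_of_order_inj g hg0
    intro a c hac
    simp only at hac
    rw [hgord a, hgord c] at hac
    exact hmono.injective (Nat.cast_injective hac)
  let gF : Fin n → F := fun j => ⟨g j, hgF j⟩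
  have hindF : LinearIndependent K gF := LinearIndependent.of_comp F.subtype hind
  haveI : Nonempty (Fin n) := ⟨⟨0, hn⟩⟩
  let g' : Module.Basis (Fin n) K F := basisOfLinearIndependentOfCardEqFinrank hindF
    (by rw [Fintype.card_fin, hrank])
  have hg' : ⇑g' = gF := coe_basisOfLinearIndependentOfCardEqFinrank _ _
  set M := b.toMatrix ⇑g' with hM
  haveI := b.invertibleToMatrix g'
  have hdet : M.det ≠ 0 := (Matrix.isUnit_det_of_invertible M).ne_zero
  have hexp : ∀ j, ((g' j : K⟦X⟧)) = ∑ k, M k j • ((b k : K⟦X⟧)) := by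
    intro j
    have h1 := b.sum_toMatrix_smul_self g' j
    calc ((g' j : K⟦X⟧)) = F.subtype (g' j) := rfl
    _ = F.subtype (∑ i, M i j • b i) := by rw [h1]
    _ = ∑ k, M k j • ((b k : K⟦X⟧)) := by rw [map_sum]; simp
  have hWmat : (Matrix.of fun i j : Fin n => (d⁄dX K)^[(i : ℕ)] ((g' j : K⟦X⟧))) =
      (Matrix.of fun i j : Fin n => (d⁄dX K)^[(i : ℕ)] ((b j : K⟦X⟧))) *
        M.map (PowerSeries.C (R := K)) := by
    apply Matrix.ext
    intro i j
    rw [Matrix.mul_apply]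
    simp only [Matrix.of_apply, Matrix.map_apply]
    rw [hexp j, iterate_derivative_sum_smul]
    apply Finset.sum_congr rfl
    intro k _
    rw [smul_eq_C_mul, mul_comm]
  have hWrel : Wronskian (fun j => ((g' j : K⟦X⟧))) =
      Wronskian (fun j => ((b j : K⟦X⟧))) * PowerSeries.C (R := K) M.det := by
    simp only [Wronskian]
    rw [hWmat, Matrix.det_mul]
    congr 1
    exact (RingHom.map_det (PowerSeries.C (R := K)) M).symm
  have hordg : ∀ j, ((g' j : K⟦X⟧)).order = ((d j : ℕ) : ℕ∞) := by
    intro j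
    rw [hg']
    exact hgord j
  obtain ⟨hWg_ne, hWg_ord⟩ := wronskian_order (fun j => ((g' j : K⟦X⟧))) d hmono hordg
  set N : ℕ := (∑ j, d j) - ∑ j : Fin n, (j : ℕ) with hN
  have hWb_ne : Wronskian (fun j => ((b j : K⟦X⟧))) ≠ 0 := by
    intro h
    apply hWg_ne
    rw [hWrel, h, zero_mul]
  have hCdet_ord : (PowerSeries.C (R := K) M.det).order = ((0 : ℕ) : ℕ∞) :=
    order_eq_nat.mpr ⟨by simpa using hdet, fun i hi => absurd hi (Nat.not_lt_zero i)⟩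
  have hWb_ord : (Wronskian (fun j => ((b j : K⟦X⟧)))).order = (N : ℕ∞) := by
    have h1 : (Wronskian (fun j => ((g' j : K⟦X⟧)))).order =
        (Wronskian (fun j => ((b j : K⟦X⟧)))).order + (PowerSeries.C (R := K) M.det).order := by
      rw [hWrel]
      exact order_mul _ _
    rw [hWg_ord, hCdet_ord] at h1
    rw [Nat.cast_zero, add_zero] at h1
    exact h1.symm
  refine ⟨hWb_ne, ?_⟩
  have hordf : f.order ≠ ⊤ := fun h => hf (order_eq_top.mp h)
  set t0 := f.order.toNat with ht0
  have hft : f.order = (t0 : ℕ∞) := (ENat.coe_toNat hordf).symm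
  have ht0T : t0 ∈ T := by
    rw [hT, Set.Finite.mem_toFinset]
    exact ⟨f, hfF, hf, hft⟩
  obtain ⟨k, hk⟩ : ∃ k, d k = t0 :=
    ⟨iso.symm ⟨t0, ht0T⟩, by simp [hd]⟩
  have hdj := strictMono_fin_val_le hmono
  have hfin : t0 ≤ N + (n - 1) := by
    obtain ⟨m, rfl⟩ : ∃ m, n = m + 1 := ⟨n - 1, by omega⟩
    have hlast : d k ≤ d (Fin.last m) := hmono.monotone (Fin.le_last k)
    have hsplit1 : (∑ j : Fin (m + 1), d j)
        = (∑ j : Fin m, d (Fin.castSucc j)) + d (Fin.last m) := Fin.sum_univ_castSucc d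
    have hsplit2 : (∑ j : Fin (m + 1), (j : ℕ))
        = (∑ j : Fin m, ((Fin.castSucc j : Fin (m + 1)) : ℕ)) + m := by
      rw [Fin.sum_univ_castSucc (f := fun j : Fin (m + 1) => (j : ℕ))]
      simp
    have hbound : (∑ j : Fin m, ((Fin.castSucc j : Fin (m + 1)) : ℕ))
        ≤ ∑ j : Fin m, d (Fin.castSucc j) := Finset.sum_le_sum (fun j _ => hdj _)
    have hle : (∑ j : Fin (m + 1), (j : ℕ)) ≤ ∑ j, d j :=
      Finset.sum_le_sum (fun j _ => hdj j)
    have hNsum : N + (∑ j : Fin (m + 1), (j : ℕ)) = ∑ j, d j := by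
      rw [hN]
      omega
    omega
  rw [hft, hWb_ord, ← Nat.cast_add]
  exact_mod_cast hfin
end

section
/- Let a_1,...,a_n be positive integers. If there exist rationals c_1,...,c_n, not all zero, with Σ c_i √(a_i) = 0, then there exist indices i < j such that √(a_i)/√(a_j) ∈ ℚ. -/
/-- Membership in the ring ℚ(√p₁, …, √pₖ), defined recursively. -/
def MemL : List ℕ → ℝ → Prop
  | [], x => ∃ q : ℚ, x = q
  | p :: L, x => ∃ a b : ℝ, MemL L a ∧ MemL L b ∧ x = a + b * Real.sqrt p

theorem memL_ratCast (L : List ℕ) : ∀ q : ℚ, MemL L (q : ℝ) := by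
  induction L with
  | nil => exact fun q => ⟨q, rfl⟩
  | cons p L ih => exact fun q => ⟨q, 0, ih q, by simpa using ih 0, by ring⟩

theorem memL_zero (L : List ℕ) : MemL L 0 := by simpa using memL_ratCast L 0

theorem memL_add : ∀ (L : List ℕ) {x y : ℝ}, MemL L x → MemL L y → MemL L (x + y) := by
  intro L
  induction L with
  | nil => rintro x y ⟨q, rfl⟩ ⟨r, rfl⟩; exact ⟨q + r, by push_cast; ring⟩
  | cons p L ih =>
    rintro x y ⟨a, b, ha, hb, rfl⟩ ⟨a', b', ha', hb', rfl⟩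
    exact ⟨a + a', b + b', ih ha ha', ih hb hb', by ring⟩

theorem memL_natCast (L : List ℕ) (m : ℕ) : MemL L (m : ℝ) := by
  have := memL_ratCast L (m : ℚ)
  simpa using this

theorem memL_mul : ∀ (L : List ℕ) {x y : ℝ},
    MemL L x → MemL L y → MemL L (x * y) := by
  intro L
  induction L with
  | nil => rintro x y ⟨q, rfl⟩ ⟨r, rfl⟩; exact ⟨q * r, by push_cast; ring⟩
  | cons p L ih =>
    rintro x y ⟨a, b, ha, hb, rfl⟩ ⟨a', b', ha', hb', rfl⟩
    have hp : Real.sqrt p * Real.sqrt p = p :=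
      Real.mul_self_sqrt (Nat.cast_nonneg p)
    refine ⟨a * a' + b * b' * p, a * b' + b * a', ?_, ?_, ?_⟩
    · exact memL_add L (ih ha ha') (ih (ih hb hb') (memL_natCast L p))
    · exact memL_add L (ih ha hb') (ih hb ha')
    · linear_combination b * b' * hp

theorem memL_neg : ∀ (L : List ℕ) {x : ℝ}, MemL L x → MemL L (-x) := by
  intro L
  induction L with
  | nil => rintro x ⟨q, rfl⟩; exact ⟨-q, by push_cast; ring⟩
  | cons p L ih =>
    rintro x ⟨a, b, ha, hb, rfl⟩
    exact ⟨-a, -b, ih ha, ih hb, by ring⟩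

theorem memL_sum {ι : Type*} (L : List ℕ) (s : Finset ι) (f : ι → ℝ)
    (h : ∀ i ∈ s, MemL L (f i)) : MemL L (∑ i ∈ s, f i) := by
  classical
  induction s using Finset.induction with
  | empty => simpa using memL_zero L
  | @insert j s' hns ih =>
    rw [Finset.sum_insert hns]
    exact memL_add L (h j (Finset.mem_insert_self _ _))
      (ih fun i hi => h i (Finset.mem_insert_of_mem hi))

theorem squarefree_not_isSquare {m : ℕ} (hm : Squarefree m)
    (hq : ∃ q, q.Prime ∧ q ∣ m) : ¬ IsSquare m := by
  rintro ⟨k, rfl⟩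
  obtain ⟨q, hqp, hqd⟩ := hq
  have : q ∣ k := hqp.dvd_of_dvd_pow (n := 2) (by rwa [sq])
  exact hqp.not_isUnit (hm q (mul_dvd_mul this this))

theorem memL_sqrt : ∀ (L : List ℕ), (∀ p ∈ L, p.Prime) → ∀ (m : ℕ), Squarefree m →
    (∀ q : ℕ, q.Prime → q ∣ m → q ∈ L) → MemL L (Real.sqrt m) := by
  intro L
  induction L with
  | nil =>
    intro _ m hm hprimes
    have : m = 1 := by
      by_contra h1
      obtain ⟨q, hqp, hqd⟩ := Nat.exists_prime_and_dvd h1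
      exact List.not_mem_nil (hprimes q hqp hqd)
    subst this
    exact ⟨1, by simp⟩
  | cons p L ih =>
    intro hLp m hm hprimes
    have hLp' : ∀ q ∈ L, q.Prime := fun q hq => hLp q (List.mem_cons_of_mem _ hq)
    have hpp : p.Prime := hLp p List.mem_cons_self
    by_cases hpm : p ∣ m
    · have hdvd : m / p ∣ m := Nat.div_dvd_of_dvd hpm
      have hmp_sf : Squarefree (m / p) := hm.squarefree_of_dvd hdvd
      have hp_not : ¬ p ∣ m / p := by
        intro hcon
        have h2 : p * p ∣ m := by
          calc p * p ∣ p * (m / p) := mul_dvd_mul_left p hcon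
          _ = m := Nat.mul_div_cancel' hpm
        exact hpp.not_isUnit (hm p h2)
      have hsplit : Real.sqrt m = Real.sqrt (m / p : ℕ) * Real.sqrt p := by
        rw [← Real.sqrt_mul (Nat.cast_nonneg _)]
        congr 1
        rw [← Nat.cast_mul, Nat.div_mul_cancel hpm]
      refine ⟨0, Real.sqrt (m / p : ℕ), memL_zero L, ih hLp' (m / p) hmp_sf ?_, by
        rw [hsplit]; ring⟩
      intro q hq hqd
      have hqm : q ∣ m := hqd.trans hdvd
      rcases List.mem_cons.mp (hprimes q hq hqm) with h | h
      · exact absurd (h ▸ hqd) hp_not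
      · exact h
    · refine ⟨Real.sqrt m, 0, ih hLp' m hm ?_, memL_zero L, by ring⟩
      intro q hq hqd
      rcases List.mem_cons.mp (hprimes q hq hqd) with h | h
      · exact absurd (h ▸ hqd) hpm
      · exact h

theorem memL_key : ∀ L : List ℕ, L.Nodup → (∀ p ∈ L, p.Prime) →
    (∀ x : ℝ, MemL L x → MemL L x⁻¹) ∧
    (∀ m : ℕ, Squarefree m → (∃ q : ℕ, q.Prime ∧ q ∣ m ∧ q ∉ L) →
      ¬ MemL L (Real.sqrt m)) := by
  intro L
  induction L with
  | nil =>
    intro _ _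
    constructor
    · rintro x ⟨q, rfl⟩
      exact ⟨q⁻¹, by push_cast; ring⟩
    · rintro m hm ⟨q, hqp, hqd, -⟩ ⟨r, hr⟩
      exact (irrational_sqrt_natCast_iff.mpr
        (squarefree_not_isSquare hm ⟨q, hqp, hqd⟩)) ⟨r, hr.symm⟩
  | cons p L ih =>
    intro hnd hpr
    have hpL : p ∉ L := (List.nodup_cons.mp hnd).1
    have hnd' : L.Nodup := (List.nodup_cons.mp hnd).2
    have hpr' : ∀ q ∈ L, q.Prime := fun q hq => hpr q (List.mem_cons_of_mem _ hq)
    have hpp : p.Prime := hpr p List.mem_cons_self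
    obtain ⟨IH1, IH2⟩ := ih hnd' hpr'
    have hsqp_not : ¬ MemL L (Real.sqrt p) :=
      IH2 p hpp.squarefree ⟨p, hpp, dvd_rfl, hpL⟩
    have hsq : Real.sqrt p * Real.sqrt p = (p : ℝ) := Real.mul_self_sqrt (Nat.cast_nonneg p)
    constructor
    · rintro x ⟨a, b, ha, hb, rfl⟩
      by_cases hx : a + b * Real.sqrt p = 0
      · rw [hx]; simpa using memL_zero (p :: L)
      · have hden : a ^ 2 - p * b ^ 2 ≠ 0 := by
          intro hd
          by_cases hb0 : b = 0
          · apply hx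
            subst hb0
            have : a = 0 := by nlinarith
            simp [this]
          · apply hsqp_not
            have hpb : Real.sqrt p = |a / b| := by
              rw [show ((p : ℕ) : ℝ) = (a / b) ^ 2 by field_simp; linarith]
              exact Real.sqrt_sq_eq_abs _
            have hmem : MemL L (a / b) := by
              rw [div_eq_mul_inv]
              exact memL_mul L ha (IH1 b hb)
            rcases abs_choice (a / b) with h | h
            · rw [hpb, h]; exact hmem
            · rw [hpb, h]; exact memL_neg L hmem
        set d : ℝ := (a ^ 2 - p * b ^ 2)⁻¹ with hd_def
        have hd_mem : MemL L d := by
          apply IH1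
          have h1 : MemL L (a ^ 2) := by rw [sq]; exact memL_mul L ha ha
          have h2 : MemL L ((p : ℝ) * b ^ 2) := by
            rw [sq]; exact memL_mul L (memL_natCast L p) (memL_mul L hb hb)
          have := memL_add L h1 (memL_neg L h2)
          simpa [sub_eq_add_neg] using this
        refine ⟨a * d, -(b * d), memL_mul L ha hd_mem, memL_neg L (memL_mul L hb hd_mem), ?_⟩
        apply inv_eq_of_mul_eq_one_right
        have key : (a + b * Real.sqrt p) * (a * d + -(b * d) * Real.sqrt p)
            = (a ^ 2 - p * b ^ 2) * d := by
          linear_combination (-(b * b * d)) * hsq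
        rw [key, hd_def, mul_inv_cancel₀ hden]
    · rintro m hm ⟨q, hqp, hqd, hqL⟩ ⟨a, b, ha, hb, hx⟩
      have hqp' : q ≠ p ∧ q ∉ L := by
        constructor
        · intro h; exact hqL (h ▸ (List.mem_cons_self : p ∈ p :: L))
        · intro h; exact hqL (List.mem_cons_of_mem _ h)
      have hmm : Real.sqrt m * Real.sqrt m = (m : ℝ) := Real.mul_self_sqrt (Nat.cast_nonneg m)
      have hsq_expand : (a + b * Real.sqrt p) * (a + b * Real.sqrt p) = (m : ℝ) := by
        rw [← hx]; exact hmm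
      have hm_eq : (m : ℝ) = a ^ 2 + p * b ^ 2 + 2 * (a * b) * Real.sqrt p := by
        linear_combination (-1 : ℝ) * hsq_expand + (b * b) * hsq
      by_cases hb0 : b = 0
      · apply IH2 m hm ⟨q, hqp, hqd, hqp'.2⟩
        rw [hx, hb0]
        simpa using ha
      by_cases ha0 : a = 0
      · -- √m = b √p, so √(m p) = b p ∈ MemL L
        have hx' : Real.sqrt m = b * Real.sqrt p := by rw [hx, ha0]; ring
        have h1 : Real.sqrt ((m * p : ℕ)) = b * p := by
          rw [Nat.cast_mul, Real.sqrt_mul (Nat.cast_nonneg m), hx']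
          linear_combination b * hsq
        by_cases hpm : p ∣ m
        · set m₀ := m / p with hm₀
          have hm_eq' : m = p * m₀ := (Nat.mul_div_cancel' hpm).symm
          have hppos : 0 < p := hpp.pos
          have hsm0 : Real.sqrt m₀ = b := by
            have h2 : Real.sqrt ((m * p : ℕ)) = p * Real.sqrt m₀ := by
              rw [show m * p = p ^ 2 * m₀ by rw [hm_eq']; ring]
              push_cast
              rw [Real.sqrt_mul (by positivity), Real.sqrt_sq (by positivity)]
            rw [h1] at h2
            have hpne : (p : ℝ) ≠ 0 := by positivity
            have h3 : (p : ℝ) * Real.sqrt m₀ = (p : ℝ) * b := by linarith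
            exact (mul_left_cancel₀ hpne h3)
          apply IH2 m₀ (hm.squarefree_of_dvd (Nat.div_dvd_of_dvd hpm)) ?_ (hsm0 ▸ hb)
          refine ⟨q, hqp, ?_, hqp'.2⟩
          have : q ∣ p * m₀ := hm_eq' ▸ hqd
          rcases (Nat.Prime.dvd_mul hqp).mp this with h | h
          · exact absurd ((Nat.prime_dvd_prime_iff_eq hqp hpp).mp h) hqp'.1
          · exact h
        · have hsf : Squarefree (m * p) := by
            rw [Nat.squarefree_mul_iff]
            exact ⟨((hpp.coprime_iff_not_dvd).mpr hpm).symm, hm, hpp.squarefree⟩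
          apply IH2 (m * p) hsf ⟨q, hqp, dvd_mul_of_dvd_left hqd p, hqp'.2⟩
          rw [h1]
          exact memL_mul L hb (memL_natCast L p)
      · -- a ≠ 0 and b ≠ 0 : √p ∈ MemL L
        apply hsqp_not
        have hab : (2 : ℝ) * a * b ≠ 0 := by
          simp only [mul_ne_zero_iff]
          exact ⟨⟨two_ne_zero, ha0⟩, hb0⟩
        have : Real.sqrt p = ((m : ℝ) - a ^ 2 - p * b ^ 2) * (2 * a * b)⁻¹ := by
          rw [eq_mul_inv_iff_mul_eq₀ hab]
          linear_combination (-1 : ℝ) * hm_eq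
        rw [this]
        apply memL_mul L ?_ (IH1 _ ?_)
        · have h1 : MemL L ((m : ℝ)) := memL_natCast L m
          have h2 : MemL L (a ^ 2) := by rw [sq]; exact memL_mul L ha ha
          have h3 : MemL L ((p : ℝ) * b ^ 2) := by
            rw [sq]; exact memL_mul L (memL_natCast L p) (memL_mul L hb hb)
          have := memL_add L (memL_add L h1 (memL_neg L h2)) (memL_neg L h3)
          simpa [sub_eq_add_neg] using this
        · have : MemL L ((2 : ℝ)) := by
            have := memL_ratCast L 2; simpa using this
          exact memL_mul L (memL_mul L this ha) hb

theorem indepL : ∀ (L : List ℕ), L.Nodup → (∀ p ∈ L, p.Prime) →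
    ∀ {ι : Type} (s : Finset ι) (m : ι → ℕ) (d : ι → ℚ),
    Set.InjOn m s → (∀ i ∈ s, Squarefree (m i)) →
    (∀ i ∈ s, ∀ q : ℕ, q.Prime → q ∣ m i → q ∈ L) →
    (∑ i ∈ s, (d i : ℝ) * Real.sqrt (m i)) = 0 → ∀ i ∈ s, d i = 0 := by
  intro L
  induction L with
  | nil =>
    intro _ _ ι s m d hinj hsf hprimes hsum i hi
    have hone : ∀ j ∈ s, m j = 1 := by
      intro j hj
      by_contra h1
      obtain ⟨q, hqp, hqd⟩ := Nat.exists_prime_and_dvd h1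
      exact List.not_mem_nil (hprimes j hj q hqp hqd)
    have huniq : ∀ j ∈ s, j = i := fun j hj =>
      hinj hj hi (by rw [hone j hj, hone i hi])
    have hs : s = {i} := Finset.eq_singleton_iff_unique_mem.mpr ⟨hi, huniq⟩
    rw [hs, Finset.sum_singleton, hone i hi] at hsum
    simp only [Nat.cast_one, Real.sqrt_one, mul_one] at hsum
    exact_mod_cast hsum
  | cons p L ih =>
    intro hnd hpr ι s m d hinj hsf hprimes hsum
    classical
    have hpL : p ∉ L := (List.nodup_cons.mp hnd).1
    have hnd' : L.Nodup := (List.nodup_cons.mp hnd).2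
    have hpr' : ∀ q ∈ L, q.Prime := fun q hq => hpr q (List.mem_cons_of_mem _ hq)
    have hpp : p.Prime := hpr p List.mem_cons_self
    obtain ⟨IH1, IH2⟩ := memL_key L hnd' hpr'
    set s₁ := s.filter (fun i => p ∣ m i) with hs₁
    set s₂ := s.filter (fun i => ¬ p ∣ m i) with hs₂
    -- properties of division by p on s₁
    have hdiv : ∀ i ∈ s₁, p * (m i / p) = m i := by
      intro i hi
      exact Nat.mul_div_cancel' (Finset.mem_filter.mp hi).2
    have hsf₁ : ∀ i ∈ s₁, Squarefree (m i / p) := by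
      intro i hi
      exact (hsf i (Finset.mem_filter.mp hi).1).squarefree_of_dvd
        (Nat.div_dvd_of_dvd (Finset.mem_filter.mp hi).2)
    have hpnotdvd : ∀ i ∈ s₁, ¬ p ∣ (m i / p) := by
      intro i hi hcon
      have h2 : p * p ∣ m i := by
        calc p * p ∣ p * (m i / p) := mul_dvd_mul_left p hcon
        _ = m i := hdiv i hi
      exact hpp.not_isUnit ((hsf i (Finset.mem_filter.mp hi).1) p h2)
    have hprimes₁ : ∀ i ∈ s₁, ∀ q : ℕ, q.Prime → q ∣ (m i / p) → q ∈ L := by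
      intro i hi q hq hqd
      have hqm : q ∣ m i := hqd.trans (Nat.div_dvd_of_dvd (Finset.mem_filter.mp hi).2)
      rcases List.mem_cons.mp (hprimes i (Finset.mem_filter.mp hi).1 q hq hqm) with h | h
      · exact absurd (h ▸ hqd) (hpnotdvd i hi)
      · exact h
    have hprimes₂ : ∀ i ∈ s₂, ∀ q : ℕ, q.Prime → q ∣ m i → q ∈ L := by
      intro i hi q hq hqd
      rcases List.mem_cons.mp (hprimes i (Finset.mem_filter.mp hi).1 q hq hqd) with h | h
      · exact absurd (h ▸ hqd) (Finset.mem_filter.mp hi).2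
      · exact h
    have hinj₁ : Set.InjOn (fun i => m i / p) s₁ := by
      intro i hi j hj hij
      simp only at hij
      have : m i = m j := by
        rw [← hdiv i hi, ← hdiv j hj, hij]
      exact hinj (Finset.mem_filter.mp hi).1 (Finset.mem_filter.mp hj).1 this
    set X := ∑ i ∈ s₁, (d i : ℝ) * Real.sqrt ((m i / p : ℕ)) with hX
    set Y := ∑ i ∈ s₂, (d i : ℝ) * Real.sqrt (m i) with hY
    have hterm : ∀ i ∈ s₁, (d i : ℝ) * Real.sqrt (m i)
        = Real.sqrt p * ((d i : ℝ) * Real.sqrt ((m i / p : ℕ))) := by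
      intro i hi
      have : ((m i : ℕ) : ℝ) = (p : ℝ) * ((m i / p : ℕ) : ℝ) := by
        rw [← Nat.cast_mul, hdiv i hi]
      rw [this, Real.sqrt_mul (Nat.cast_nonneg p)]
      ring
    have hsplit : Real.sqrt p * X + Y = 0 := by
      rw [hX, Finset.mul_sum, hY]
      rw [← hsum, ← Finset.sum_filter_add_sum_filter_not s (fun i => p ∣ m i)]
      congr 1
      exact (Finset.sum_congr rfl hterm).symm
    by_cases hXzero : X = 0
    · have hYzero : Y = 0 := by
        rw [hXzero, mul_zero, zero_add] at hsplit
        exact hsplit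
      have hd₁ : ∀ i ∈ s₁, d i = 0 :=
        ih hnd' hpr' s₁ (fun i => m i / p) d hinj₁ hsf₁ hprimes₁ hXzero
      have hd₂ : ∀ i ∈ s₂, d i = 0 :=
        ih hnd' hpr' s₂ m d
          (hinj.mono (by intro x hx; exact (Finset.mem_filter.mp hx).1))
          (fun i hi => hsf i (Finset.mem_filter.mp hi).1) hprimes₂ hYzero
      intro i hi
      by_cases hdv : p ∣ m i
      · exact hd₁ i (Finset.mem_filter.mpr ⟨hi, hdv⟩)
      · exact hd₂ i (Finset.mem_filter.mpr ⟨hi, hdv⟩)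
    · exfalso
      have hXmem : MemL L X := by
        apply memL_sum
        intro i hi
        exact memL_mul L (memL_ratCast L (d i))
          (memL_sqrt L hpr' _ (hsf₁ i hi) (hprimes₁ i hi))
      have hYmem : MemL L Y := by
        apply memL_sum
        intro i hi
        exact memL_mul L (memL_ratCast L (d i))
          (memL_sqrt L hpr' _ (hsf i (Finset.mem_filter.mp hi).1) (hprimes₂ i hi))
      have hsqp : Real.sqrt p = (-Y) * X⁻¹ := by
        rw [eq_mul_inv_iff_mul_eq₀ hXzero]
        linarith
      have : MemL L (Real.sqrt p) := by
        rw [hsqp]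
        exact memL_mul L (memL_neg L hYmem) (IH1 X hXmem)
      exact IH2 p hpp.squarefree ⟨p, hpp, dvd_rfl, hpL⟩ this

theorem sqrt_linear_dependence_pairwise
    {n : ℕ} (a : Fin n → ℕ) (ha : ∀ i, 0 < a i)
    (c : Fin n → ℚ) (hc : ∃ i, c i ≠ 0)
    (hsum : ∑ i, (c i : ℝ) * Real.sqrt (a i) = 0) :
    ∃ i j : Fin n, i < j ∧ ∃ r : ℚ, Real.sqrt (a i) / Real.sqrt (a j) = (r : ℝ) := by
  by_contra hcon
  push_neg at hcon
  choose b s hb hs heq hsf using fun i => Nat.sq_mul_squarefree_of_pos (ha i)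
  have hsqrt : ∀ i, Real.sqrt (a i) = (s i : ℝ) * Real.sqrt (b i) := by
    intro i
    rw [← heq i]
    push_cast
    rw [Real.sqrt_mul (by positivity), Real.sqrt_sq (by positivity)]
  have hbne : ∀ i j : Fin n, i < j → b i ≠ b j := by
    intro i j hij hEq
    apply hcon i j hij ((s i : ℚ) / (s j : ℚ))
    rw [hsqrt i, hsqrt j, hEq]
    have h0 : Real.sqrt (b j) ≠ 0 := by
      have : (0 : ℝ) < (b j : ℝ) := by exact_mod_cast hb j
      positivity
    rw [mul_div_mul_right _ _ h0]
    push_cast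
    rfl
  have hbinj : Set.InjOn b (Finset.univ : Finset (Fin n)) := by
    intro i _ j _ hEq
    by_contra hne
    rcases lt_or_gt_of_ne hne with h | h
    · exact hbne i j h hEq
    · exact hbne j i h hEq.symm
  set N := (Finset.univ.sup b) + 1 with hN
  set L := (List.range N).filter (fun k => decide (Nat.Prime k)) with hL
  have hLnd : L.Nodup := (List.nodup_range : (List.range N).Nodup).filter _
  have hLpr : ∀ p ∈ L, p.Prime := by
    intro p hp
    have := (List.mem_filter.mp hp).2
    simpa using this
  have hprimes : ∀ i ∈ (Finset.univ : Finset (Fin n)), ∀ q : ℕ, q.Prime → q ∣ b i → q ∈ L := by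
    intro i _ q hq hqd
    rw [hL, List.mem_filter]
    constructor
    · rw [List.mem_range]
      have h1 : q ≤ b i := Nat.le_of_dvd (hb i) hqd
      have h2 : b i ≤ Finset.univ.sup b := Finset.le_sup (Finset.mem_univ i)
      omega
    · simpa using hq
  have hsum' : ∑ i ∈ (Finset.univ : Finset (Fin n)), ((c i * s i : ℚ) : ℝ) * Real.sqrt (b i) = 0 := by
    rw [← hsum]
    apply Finset.sum_congr rfl
    intro i _
    rw [hsqrt i]
    push_cast
    ring
  have hzero := indepL L hLnd hLpr Finset.univ b (fun i => c i * (s i : ℚ)) hbinj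
    (fun i _ => hsf i) hprimes hsum'
  obtain ⟨i, hci⟩ := hc
  have := hzero i (Finset.mem_univ i)
  simp only [mul_eq_zero] at this
  rcases this with h | h
  · exact hci h
  · have : s i = 0 := by exact_mod_cast h
    exact (hs i).ne' this
end

section
/- Let a be a positive integer that is not a perfect square, and p a prime not dividing 4a. For p in a set of primes of natural density 1/2, a is not a quadratic residue modulo p. In a weaker checkable form: if a is a perfect square, then for every prime p, a mod p is a square in F_p; conversely, if a is not a perfect square, there exists a prime p (not dividing 4a) such that a is not a square modulo p. -/
open Nat jacobiSym
open scoped NumberTheorySymbols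

private lemma modEq_of_dvd' {s r b v : ℕ} (hsr : s ∣ r) (h : b ≡ v [MOD r]) : b ≡ v [MOD s] := by
  obtain ⟨t, rfl⟩ := hsr
  exact Nat.ModEq.of_mul_right t h

private lemma crt3 {n₁ n₂ n₃ : ℕ} (r₁ r₂ r₃ : ℕ) (h12 : n₁.Coprime n₂) (h13 : n₁.Coprime n₃)
    (h23 : n₂.Coprime n₃) :
    ∃ b : ℕ, b ≡ r₁ [MOD n₁] ∧ b ≡ r₂ [MOD n₂] ∧ b ≡ r₃ [MOD n₃] := by
  obtain ⟨k, hk1, hk2⟩ := Nat.chineseRemainder h12 r₁ r₂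
  obtain ⟨b, hb1, hb2⟩ := Nat.chineseRemainder (Nat.Coprime.mul h13 h23) k r₃
  exact ⟨b, ((hb1.of_mul_right n₂).trans hk1), ((hb1.of_mul_left n₁).trans hk2), hb2⟩

/-- Key construction: for squarefree `c ≥ 2` dividing `a ≠ 0`, there is an odd `b`
coprime to `a` with Jacobi symbol `J(c | b) = -1`. -/
private lemma exists_jacobi_neg_one (a c : ℕ) (ha : a ≠ 0) (hc : Squarefree c)
    (h2 : 2 ≤ c) (hca : c ∣ a) :
    ∃ b : ℕ, Odd b ∧ Nat.Coprime b a ∧ J((c : ℤ) | b) = -1 := by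
  by_cases hc2 : c = 2
  · -- case c = 2
    subst hc2
    set r := ordCompl[2] a with hr
    have hr_odd : ¬ 2 ∣ r := Nat.not_dvd_ordCompl Nat.prime_two ha
    have h2r : Nat.Coprime 2 r := (Nat.prime_two.coprime_iff_not_dvd).mpr hr_odd
    have h8r : Nat.Coprime 8 r := by
      have := Nat.Coprime.pow_left 3 h2r
      norm_num at this
      exact this
    obtain ⟨b, hb8, hbr⟩ := Nat.chineseRemainder h8r 5 1
    have hb8' : b % 8 = 5 := by simpa [Nat.ModEq] using hb8
    have hb_odd : Odd b := by
      rw [Nat.odd_iff]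
      have := Nat.mod_mod_of_dvd b (by norm_num : 2 ∣ 8)
      omega
    have hb2 : Nat.Coprime b 2 := by
      rw [Nat.coprime_two_right]; exact hb_odd
    have hbr' : Nat.Coprime b r := by
      have := Nat.ModEq.gcd_eq hbr
      simpa [Nat.Coprime] using this
    have hba : Nat.Coprime b a := by
      conv_rhs => rw [← Nat.ordProj_mul_ordCompl_eq_self a 2]
      exact Nat.Coprime.mul_right (hb2.pow_right _) hbr'
    refine ⟨b, hb_odd, hba, ?_⟩
    rw [show ((2:ℕ):ℤ) = 2 by norm_num, jacobiSym.at_two hb_odd]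
    have : (b : ZMod 8) = 5 := by
      rw [← ZMod.natCast_mod b 8, hb8']; norm_num
    rw [this]
    decide
  · -- case c has an odd prime factor
    set d := ordCompl[2] c with hd
    have hd_dvd : d ∣ c := Nat.ordCompl_dvd c 2
    have hd_odd : ¬ 2 ∣ d := Nat.not_dvd_ordCompl Nat.prime_two (by omega)
    have hd_sf : Squarefree d := hc.squarefree_of_dvd hd_dvd
    have hd1 : d ≠ 1 := by
      intro h1
      have hce : 2 ^ c.factorization 2 * d = c := Nat.ordProj_mul_ordCompl_eq_self c 2
      rw [h1, mul_one] at hce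
      have hle : c.factorization 2 ≤ 1 := hc.natFactorization_le_one 2
      interval_cases h : c.factorization 2 <;> omega
    have hd0 : d ≠ 0 := fun h => hd_odd (by simp [h])
    have hdOdd : Odd d := Nat.odd_iff.mpr (by omega)
    set q := d.minFac with hq_def
    have hq : q.Prime := Nat.minFac_prime hd1
    have hqd : q ∣ d := Nat.minFac_dvd d
    have hq2 : q ≠ 2 := hdOdd.ne_two_of_dvd_nat hqd
    set s := d / q with hs_def
    have hds : q * s = d := Nat.mul_div_cancel' hqd
    have hqs : Nat.Coprime q s := Nat.coprime_of_squarefree_mul (by rw [hds]; exact hd_sf)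
    set a₁ := ordCompl[2] a with ha₁
    have ha₁0 : a₁ ≠ 0 := (Nat.ordCompl_pos 2 ha).ne'
    have ha₁_odd : ¬ 2 ∣ a₁ := Nat.not_dvd_ordCompl Nat.prime_two ha
    set r := ordCompl[q] a₁ with hr
    have hr0 : r ≠ 0 := (Nat.ordCompl_pos q ha₁0).ne'
    have hr_dvd : r ∣ a₁ := Nat.ordCompl_dvd a₁ q
    have hr_odd : ¬ 2 ∣ r := fun h => ha₁_odd (h.trans hr_dvd)
    -- a nonsquare mod q
    haveI : Fact q.Prime := ⟨hq⟩
    obtain ⟨u0, hu0⟩ := FiniteField.exists_nonsquare (F := ZMod q)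
      (by rwa [ZMod.ringChar_zmod_n])
    have hu0_ne : u0 ≠ 0 := fun h => hu0 (h ▸ ⟨0, by ring⟩)
    set u := u0.val with hu_def
    have hu_cast : (u : ZMod q) = u0 := ZMod.natCast_rightInverse u0
    have hqu : ¬ q ∣ u := by
      intro h
      have : (u : ZMod q) = 0 := (ZMod.natCast_eq_zero_iff u q).mpr h
      rw [hu_cast] at this
      exact hu0_ne this
    -- coprimality of the moduli
    have h2q : Nat.Coprime 2 q := (Nat.prime_two.coprime_iff_not_dvd).mpr
      (fun h => hq2 ((Nat.prime_dvd_prime_iff_eq Nat.prime_two hq).mp h).symm)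
    have h8q : Nat.Coprime 8 q := by
      have := Nat.Coprime.pow_left 3 h2q; norm_num at this; exact this
    have h2r : Nat.Coprime 2 r := (Nat.prime_two.coprime_iff_not_dvd).mpr hr_odd
    have h8r : Nat.Coprime 8 r := by
      have := Nat.Coprime.pow_left 3 h2r; norm_num at this; exact this
    have hqr : Nat.Coprime q r := Nat.coprime_ordCompl hq ha₁0
    obtain ⟨b, hb8, hbq, hbr⟩ := crt3 1 u 1 h8q h8r hqr
    have hb8' : b % 8 = 1 := by simpa [Nat.ModEq] using hb8
    have hb_odd : Odd b := by
      rw [Nat.odd_iff]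
      have := Nat.mod_mod_of_dvd b (by norm_num : 2 ∣ 8)
      omega
    have hb4 : b % 4 = 1 := by
      have := Nat.mod_mod_of_dvd b (by norm_num : 4 ∣ 8)
      omega
    -- b coprime to a
    have hb2 : Nat.Coprime b 2 := by rw [Nat.coprime_two_right]; exact hb_odd
    have hbq' : Nat.Coprime b q := by
      have h1 := Nat.ModEq.gcd_eq hbq
      have h2 : Nat.gcd u q = 1 := (Nat.coprime_comm.mp ((hq.coprime_iff_not_dvd).mpr hqu))
      simpa [Nat.Coprime, h2] using h1
    have hbr' : Nat.Coprime b r := by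
      have := Nat.ModEq.gcd_eq hbr
      simpa [Nat.Coprime] using this
    have hba : Nat.Coprime b a := by
      conv_rhs => rw [← Nat.ordProj_mul_ordCompl_eq_self a 2, ← ha₁,
        ← Nat.ordProj_mul_ordCompl_eq_self a₁ q, ← hr]
      exact Nat.Coprime.mul_right (hb2.pow_right _)
        (Nat.Coprime.mul_right (hbq'.pow_right _) hbr')
    -- s divides r, so b ≡ 1 mod s
    have hsr : s ∣ r := by
      have hsd : s ∣ d := Dvd.intro_left q hds
      have hsa : s ∣ a := hsd.trans (hd_dvd.trans hca)
      have hs_odd : ¬ 2 ∣ s := fun h => hd_odd (h.trans hsd)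
      have hs2 : Nat.Coprime s (2 ^ a.factorization 2) :=
        (Nat.coprime_comm.mp ((Nat.prime_two.coprime_iff_not_dvd).mpr hs_odd)).pow_right _
      have hsa₁ : s ∣ a₁ := by
        have : s ∣ 2 ^ a.factorization 2 * a₁ := by
          rw [Nat.ordProj_mul_ordCompl_eq_self a 2]; exact hsa
        exact (Nat.Coprime.dvd_of_dvd_mul_left hs2 this)
      have hsq' : Nat.Coprime s (q ^ a₁.factorization q) := (hqs.symm).pow_right _
      have : s ∣ q ^ a₁.factorization q * r := by
        rw [Nat.ordProj_mul_ordCompl_eq_self a₁ q]; exact hsa₁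
      exact Nat.Coprime.dvd_of_dvd_mul_left hsq' this
    have hbs : b ≡ 1 [MOD s] := modEq_of_dvd' hsr hbr
    refine ⟨b, hb_odd, hba, ?_⟩
    -- compute the Jacobi symbol
    have hce : 2 ^ c.factorization 2 * d = c := Nat.ordProj_mul_ordCompl_eq_self c 2
    have hcast : (c : ℤ) = 2 ^ c.factorization 2 * (d : ℤ) := by
      exact_mod_cast hce.symm
    have hJ2 : J(2 | b) = 1 := by
      rw [jacobiSym.at_two hb_odd]
      have : (b : ZMod 8) = 1 := by
        rw [← ZMod.natCast_mod b 8, hb8']; norm_num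
      rw [this]
      decide
    have hJd : J((d : ℤ) | b) = -1 := by
      have hq0 : q ≠ 0 := hq.ne_zero
      have hs0 : s ≠ 0 := by
        intro h; rw [h, mul_zero] at hds; exact hd0 hds.symm
      rw [jacobiSym.quadratic_reciprocity_one_mod_four' hdOdd hb4, ← hds,
        jacobiSym.mul_right' (b : ℤ) hq0 hs0]
      have hJbq : J((b : ℤ) | q) = -1 := by
        have hmod : ((b : ℤ)) % (q : ℕ) = ((u : ℤ)) % (q : ℕ) := by
          have : b % q = u % q := hbq
          exact_mod_cast congrArg (fun t : ℕ => (t : ℤ)) this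
        rw [jacobiSym.mod_left' hmod]
        rw [← legendreSym.to_jacobiSym q (u : ℤ)]
        rw [legendreSym.eq_neg_one_iff]
        rw [show (((u : ℤ) : ZMod q)) = (u : ZMod q) by push_cast; rfl, hu_cast]
        exact hu0
      have hJbs : J((b : ℤ) | s) = 1 := by
        have hmod : ((b : ℤ)) % (s : ℕ) = ((1 : ℤ)) % (s : ℕ) := by
          have : b % s = 1 % s := hbs
          exact_mod_cast congrArg (fun t : ℕ => (t : ℤ)) this
        rw [jacobiSym.mod_left' hmod, jacobiSym.one_left]
      rw [hJbq, hJbs]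
      ring
    rw [hcast, jacobiSym.mul_left, jacobiSym.pow_left, hJ2, hJd]
    ring

theorem exists_prime_nonresidue_of_not_square
    (a : ℕ) (ha : 0 < a) (hns : ¬∃ m : ℕ, a = m ^ 2) :
    ∃ p : ℕ, p.Prime ∧ ¬(p ∣ 4 * a) ∧ ¬∃ x : ZMod p, x ^ 2 = (a : ZMod p) := by
  obtain ⟨c, m, hc_pos, hm_pos, hcm, hc_sf⟩ := Nat.sq_mul_squarefree_of_pos ha
  have hc2 : 2 ≤ c := by
    rcases Nat.lt_or_ge c 2 with h | h
    · interval_cases c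
      exact absurd ⟨m, by rw [← hcm, mul_one]⟩ hns
    · exact h
  have hca : c ∣ a := ⟨m ^ 2, by rw [← hcm]; ring⟩
  obtain ⟨b, hb_odd, hba, hJ⟩ := exists_jacobi_neg_one a c ha.ne' hc_sf hc2 hca
  obtain ⟨p, hp, hpb, hJp⟩ := jacobiSym.eq_neg_one_at_prime_divisor_of_eq_neg_one hJ
  haveI : Fact p.Prime := ⟨hp⟩
  have hpa : ¬ p ∣ a := by
    intro h
    have : p ∣ Nat.gcd b a := Nat.dvd_gcd hpb h
    rw [hba] at this
    have := Nat.le_of_dvd one_pos this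
    have := hp.two_le
    omega
  have hp2 : p ≠ 2 := hb_odd.ne_two_of_dvd_nat hpb
  refine ⟨p, hp, ?_, ?_⟩
  · intro h
    rcases (Nat.Prime.dvd_mul hp).mp h with h4 | hA
    · have hpd2 : p ∣ 2 := hp.dvd_of_dvd_pow (show p ∣ 2 ^ 2 by norm_num; exact h4)
      exact hp2 ((Nat.prime_dvd_prime_iff_eq hp Nat.prime_two).mp hpd2)
    · exact hpa hA
  · rintro ⟨x, hx⟩
    have hnsq : ¬IsSquare ((c : ℤ) : ZMod p) := ZMod.nonsquare_of_jacobiSym_eq_neg_one hJp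
    have hnsq' : ¬IsSquare ((c : ℕ) : ZMod p) := by
      rwa [show (((c : ℤ)) : ZMod p) = ((c : ℕ) : ZMod p) by push_cast; rfl] at hnsq
    have hpm : ¬ p ∣ m := by
      intro h
      exact hpa ((h.trans (dvd_pow_self m two_ne_zero)).trans ⟨c, hcm.symm⟩)
    have hm0 : (m : ZMod p) ≠ 0 := fun h =>
      hpm ((ZMod.natCast_eq_zero_iff m p).mp h)
    have hax : (x : ZMod p) ^ 2 = (m : ZMod p) ^ 2 * (c : ZMod p) := by
      rw [hx, ← hcm]; push_cast; ring
    apply hnsq'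
    refine ⟨x * (m : ZMod p)⁻¹, ?_⟩
    have key : (x * (m : ZMod p)⁻¹) * (x * (m : ZMod p)⁻¹) = (c : ZMod p) := by
      field_simp
      linear_combination hax
    exact key.symm
end

section
/- Let f_1,...,f_n ∈ ℝ[x] each of degree at most d with f_i(0) > 0, and c_1,...,c_n ∈ ℝ. If the power series S(x) = Σ c_i log(f_i(x)) (expanded around 0) is nonzero, then ord(S) ≤ n·d. -/
open PowerSeries

theorem order_sum_log_polynomials
    {n d : ℕ}
    (f : Fin n → Polynomial ℝ) (c : Fin n → ℝ)
    (hf : ∀ i, (f i).natDegree ≤ d) (hf0 : ∀ i, (f i).eval 0 > 0)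
    (L : Fin n → ℝ⟦X⟧)
    (hL0 : ∀ i, PowerSeries.constantCoeff (L i) = Real.log ((f i).eval 0))
    (hLode : ∀ i, ((f i : ℝ⟦X⟧) * d⁄dX ℝ (L i))
        = ((Polynomial.derivative (f i) : Polynomial ℝ) : ℝ⟦X⟧))
    (S : ℝ⟦X⟧) (hS : S = ∑ i, c i • L i) (hS0 : S ≠ 0) :
    S.order ≤ (n * d : ℕ) := by
  by_contra hord
  push_neg at hord
  have hScoeff : ∀ k : ℕ, k ≤ n * d → PowerSeries.coeff k S = 0 := by
    intro k hk
    exact PowerSeries.coeff_of_lt_order k (lt_of_le_of_lt (by exact_mod_cast hk) hord)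
  set S' := d⁄dX ℝ S with hS'
  have hS'coeff : ∀ k : ℕ, k < n * d → PowerSeries.coeff k S' = 0 := by
    intro k hk
    rw [hS', PowerSeries.coeff_derivative, hScoeff (k + 1) (by omega), zero_mul]
  set P : Polynomial ℝ := ∏ i, f i with hP
  have key : (P : ℝ⟦X⟧) * S' =
      ∑ i, c i • ((((Finset.univ.erase i).prod f * Polynomial.derivative (f i) :
        Polynomial ℝ) : ℝ⟦X⟧)) := by
    rw [hS', hS, map_sum, Finset.mul_sum]
    refine Finset.sum_congr rfl fun i _ => ?_
    rw [Derivation.map_smul, Polynomial.coe_mul, mul_smul_comm]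
    congr 1
    calc (P : ℝ⟦X⟧) * d⁄dX ℝ (L i)
        = ((((Finset.univ.erase i).prod f : Polynomial ℝ)) : ℝ⟦X⟧) * ((f i : ℝ⟦X⟧) * d⁄dX ℝ (L i)) := by
          rw [← mul_assoc, ← Polynomial.coe_mul, hP,
            ← Finset.mul_prod_erase _ _ (Finset.mem_univ i), mul_comm (f i)]
      _ = _ := by rw [hLode i]
  have hzero : (P : ℝ⟦X⟧) * S' = 0 := by
    ext k
    rw [map_zero]
    rcases lt_or_ge k (n * d) with hk | hk
    · rw [PowerSeries.coeff_mul]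
      apply Finset.sum_eq_zero
      intro p hp
      rw [Finset.HasAntidiagonal.mem_antidiagonal] at hp
      rw [hS'coeff p.2 (by omega), mul_zero]
    · rw [key, map_sum]
      apply Finset.sum_eq_zero
      intro i _
      rw [map_smul, smul_eq_mul, Polynomial.coeff_coe]
      by_cases hder : Polynomial.derivative (f i) = 0
      · rw [hder, mul_zero, Polynomial.coeff_zero, mul_zero]
      · have hdeg : (f i).natDegree ≠ 0 := by
          intro h0
          obtain ⟨a, ha⟩ := Polynomial.natDegree_eq_zero.mp h0
          exact hder (by rw [← ha, Polynomial.derivative_C])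
        have hd1 : 1 ≤ d := le_trans (Nat.one_le_iff_ne_zero.mpr hdeg) (hf i)
        have hn1 : 1 ≤ n := i.pos
        have hA : ((Finset.univ.erase i).prod f).natDegree ≤ (n - 1) * d := by
          refine le_trans (Polynomial.natDegree_prod_le _ _) ?_
          have := Finset.sum_le_card_nsmul (Finset.univ.erase i)
            (fun j => (f j).natDegree) d (fun j _ => hf j)
          simpa [Finset.card_erase_of_mem, smul_eq_mul] using this
        have hB : (Polynomial.derivative (f i)).natDegree < d :=
          lt_of_lt_of_le (Polynomial.natDegree_derivative_lt hdeg) (hf i)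
        have hlt : ((Finset.univ.erase i).prod f * Polynomial.derivative (f i)).natDegree
            < n * d := by
          calc ((Finset.univ.erase i).prod f * Polynomial.derivative (f i)).natDegree
              ≤ ((Finset.univ.erase i).prod f).natDegree
                + (Polynomial.derivative (f i)).natDegree := Polynomial.natDegree_mul_le
            _ < (n - 1) * d + d := add_lt_add_of_le_of_lt hA hB
            _ = n * d := by
                rw [Nat.sub_one_mul, Nat.sub_add_cancel (Nat.le_mul_of_pos_left d hn1)]
        rw [Polynomial.coeff_eq_zero_of_natDegree_lt (lt_of_lt_of_le hlt hk), mul_zero]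
  have hPne : (P : ℝ⟦X⟧) ≠ 0 := by
    intro h
    have h0 : PowerSeries.coeff 0 (P : ℝ⟦X⟧) = 0 := by rw [h, map_zero]
    rw [Polynomial.coeff_coe, Polynomial.coeff_zero_eq_eval_zero, hP,
      Polynomial.eval_prod] at h0
    have hpos : 0 < ∏ i, (f i).eval 0 := Finset.prod_pos fun i _ => hf0 i
    exact (ne_of_gt hpos) h0
  have hS'zero : S' = 0 := by
    rcases mul_eq_zero.mp hzero with h | h
    · exact absurd h hPne
    · exact h
  have : S = 0 := by
    ext k
    rw [map_zero]
    cases k with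
    | zero => exact hScoeff 0 (Nat.zero_le _)
    | succ m =>
      have h1 : PowerSeries.coeff m S' = 0 := by rw [hS'zero, map_zero]
      rw [hS', PowerSeries.coeff_derivative] at h1
      have : ((m : ℝ) + 1) ≠ 0 := by positivity
      exact (mul_eq_zero.mp h1).resolve_right this
  exact hS0 this
end
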